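/- arXiv:2403.02658 — 5 statements merged into one kernel-verified Lean document; each statement's English description precedes it below -/
import Mathlib

section
/- Fix $C>0$. Let $(X,\mathcal{A})$ be a measurable space, $S_n:X\to[0,Cn]$ measurable functions for $n\in\mathbb{N}_0$, $\lambda:(0,\infty)\to[0,\infty)$ with $\lambda(t)\to0$ as $t\to\infty$, and $\nu_t$ ($t>0$) non-zero finite measures on $X$. Then for any $q>0$, as $t\to\infty$, $\sum_{n=0}^\infty e^{-nq/t}\int_X \exp(-\lambda(t)S_n)\,d\nu_t \sim t\int_0^\infty e^{-qu}\int_X \exp(-\lambda(t)S_{[ut]})\,d\nu_t\,du$. -/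
open MeasureTheory Filter Real Set
open scoped Topology

/-!
For fixed `t`, the function `u ↦ e^{-qu} g ⌊ut⌋₊` is a step function, constant on each interval
`[n/t, (n+1)/t)`, and the integral of `e^{-qu}` over that interval is `(1 - e^{-q/t})/q` times
`e^{-nq/t}`. So the continuous transform is *exactly* `(1 - e^{-q/t})/q` times the discrete one,
the ratio of the two is `q / (t (1 - e^{-q/t}))`, and this tends to `1`. Both transforms are
finite and nonzero because `0 < ∫ exp(-λ(t) S_n) dν_t ≤ ν_t(X)`.
-/

lemma iUnion_Ico_natCast_div_eq_Ici {t : ℝ} (ht : 0 < t) :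
    ⋃ n : ℕ, Ico ((n : ℝ) / t) ((n + 1) / t) = Ici 0 := by
  ext u
  simp only [mem_iUnion, mem_Ico, mem_Ici, div_le_iff₀ ht, lt_div_iff₀ ht]
  refine ⟨fun ⟨n, hn, _⟩ => nonneg_of_mul_nonneg_left ((Nat.cast_nonneg n).trans hn) ht,
    fun hu => ⟨⌊u * t⌋₊, Nat.floor_le (by positivity), Nat.lt_floor_add_one _⟩⟩

lemma pairwise_disjoint_Ico_natCast_div {t : ℝ} (ht : 0 < t) :
    Pairwise (Function.onFun Disjoint fun n : ℕ => Ico ((n : ℝ) / t) ((n + 1) / t)) := by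
  have hmono : Monotone fun n : ℕ => (n : ℝ) / t := fun m n h => by dsimp only; gcongr
  simpa [Nat.cast_add_one] using hmono.pairwise_disjoint_on_Ico_succ

lemma Nat.floor_mul_eq_of_mem_Ico {t u : ℝ} (ht : 0 < t) {n : ℕ}
    (hu : u ∈ Ico ((n : ℝ) / t) ((n + 1) / t)) : ⌊u * t⌋₊ = n := by
  rw [mem_Ico, div_le_iff₀ ht, lt_div_iff₀ ht] at hu
  exact (Nat.floor_eq_iff ((Nat.cast_nonneg n).trans hu.1)).2 hu

theorem integral_Ioi_mul_comp_floor {f : ℝ → ℝ} (hf : IntegrableOn f (Ioi 0)) {g : ℕ → ℝ}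
    {M : ℝ} (hg : ∀ n, ‖g n‖ ≤ M) {t : ℝ} (ht : 0 < t) :
    ∫ u in Ioi 0, f u * g ⌊u * t⌋₊ =
      ∑' n : ℕ, (∫ u in Ico ((n : ℝ) / t) ((n + 1) / t), f u) * g n := by
  have hint : IntegrableOn (fun u => f u * g ⌊u * t⌋₊) (Ici 0) := by
    refine ((integrableOn_Ici_iff_integrableOn_Ioi).2 hf).mul_bdd ?_
      (ae_of_all _ fun u => hg _)
    exact (measurable_from_nat.comp (Nat.measurable_floor.comp
      (measurable_id.mul_const t))).aestronglyMeasurable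
  rw [← integral_Ici_eq_integral_Ioi, ← iUnion_Ico_natCast_div_eq_Ici ht,
    integral_iUnion (fun _ => measurableSet_Ico) (pairwise_disjoint_Ico_natCast_div ht)
      (by rwa [iUnion_Ico_natCast_div_eq_Ici ht])]
  refine tsum_congr fun n => ?_
  rw [← integral_mul_const]
  exact setIntegral_congr_fun measurableSet_Ico fun u hu => by
    rw [Nat.floor_mul_eq_of_mem_Ico ht hu]

lemma integral_Ico_exp_neg_mul {q : ℝ} (hq : q ≠ 0) {a b : ℝ} (hab : a ≤ b) :
    ∫ u in Ico a b, exp (-q * u) = (exp (-q * a) - exp (-q * b)) / q := by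
  rw [integral_Ico_eq_integral_Ioo, ← integral_Ioc_eq_integral_Ioo,
    ← intervalIntegral.integral_of_le hab,
    intervalIntegral.integral_comp_mul_left (fun x => exp x) (neg_ne_zero.2 hq), integral_exp,
    smul_eq_mul]
  field_simp
  ring

theorem integral_Ioi_exp_neg_mul_comp_floor {q : ℝ} (hq : 0 < q) {g : ℕ → ℝ} {M : ℝ}
    (hg : ∀ n, ‖g n‖ ≤ M) {t : ℝ} (ht : 0 < t) :
    ∫ u in Ioi 0, exp (-q * u) * g ⌊u * t⌋₊ =
      (1 - exp (-q / t)) / q * ∑' n : ℕ, exp (-n * q / t) * g n := by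
  rw [integral_Ioi_mul_comp_floor (exp_neg_integrableOn_Ioi 0 hq) hg ht, ← tsum_mul_left]
  refine tsum_congr fun n => ?_
  rw [integral_Ico_exp_neg_mul hq.ne' (by gcongr; linarith)]
  have hsplit : -q * ((n + 1) / t) = -n * q / t + -q / t := by ring
  rw [hsplit, exp_add, show -q * (n / t) = -n * q / t by ring]
  ring

lemma tendsto_mul_one_sub_exp_neg_div (q : ℝ) :
    Tendsto (fun t : ℝ => t * (1 - exp (-q / t))) atTop (𝓝 q) := by
  have hderiv : HasDerivAt (fun s => 1 - exp (-q * s)) q 0 := by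
    simpa using ((hasDerivAt_id (0 : ℝ)).const_mul (-q)).exp.const_sub 1
  refine (hderiv.tendsto_slope_zero_right.comp tendsto_inv_atTop_nhdsGT_zero).congr' ?_
  filter_upwards [eventually_gt_atTop 0] with t ht
  simp [div_eq_mul_inv]

theorem tendsto_tsum_div_integral_exp_neg_mul_comp_floor {q : ℝ} (hq : 0 < q)
    (g : ℝ → ℕ → ℝ) (hg_bdd : ∀ t > 0, ∃ M, ∀ n, ‖g t n‖ ≤ M)
    (hg_pos : ∀ t > 0, ∀ n, 0 < g t n) :
    Tendsto (fun t => (∑' n : ℕ, exp (-n * q / t) * g t n) /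
      (t * ∫ u in Ioi 0, exp (-q * u) * g t ⌊u * t⌋₊)) atTop (𝓝 1) := by
  have hlim : Tendsto (fun t => q / (t * (1 - exp (-q / t)))) atTop (𝓝 1) := by
    simpa [div_eq_mul_inv, hq.ne'] using
      ((tendsto_mul_one_sub_exp_neg_div q).inv₀ hq.ne').const_mul q
  refine hlim.congr' ?_
  filter_upwards [eventually_gt_atTop 0] with t ht
  obtain ⟨M, hM⟩ := hg_bdd t ht
  have hratio : exp (-q / t) < 1 :=
    exp_lt_one_iff.2 (div_neg_of_neg_of_pos (neg_neg_of_pos hq) ht)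
  have hsum : Summable fun n : ℕ => exp (-n * q / t) * g t n := by
    refine .of_norm_bounded
      ((summable_geometric_of_lt_one (exp_nonneg _) hratio).mul_right M) fun n => ?_
    rw [norm_mul, norm_of_nonneg (exp_nonneg _), ← exp_nat_mul,
      show (n : ℝ) * (-q / t) = -n * q / t by ring]
    exact mul_le_mul_of_nonneg_left (hM n) (exp_nonneg _)
  have hD : 0 < ∑' n : ℕ, exp (-n * q / t) * g t n :=
    hsum.tsum_pos (fun n => mul_nonneg (exp_nonneg _) (hg_pos t ht n).le) 0
      (mul_pos (exp_pos _) (hg_pos t ht 0))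
  rw [integral_Ioi_exp_neg_mul_comp_floor hq hM ht]
  have hfactor : 0 < 1 - exp (-q / t) := by linarith
  rw [div_eq_div_iff (by positivity) (by positivity)]
  field_simp

lemma norm_exp_neg_mul_le_one {l s : ℝ} (hl : 0 ≤ l) (hs : 0 ≤ s) : ‖exp (-l * s)‖ ≤ 1 := by
  rw [norm_of_nonneg (exp_nonneg _), exp_le_one_iff, neg_mul]
  exact neg_nonpos.2 (mul_nonneg hl hs)

section ExpNegMul

variable {X : Type*} [MeasurableSpace X] {μ : Measure X} {l : ℝ} {s : X → ℝ}

lemma integrable_exp_neg_mul [IsFiniteMeasure μ] (hl : 0 ≤ l) (hs_meas : Measurable s)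
    (hs : ∀ x, 0 ≤ s x) : Integrable (fun x => exp (-l * s x)) μ :=
  .of_bound (measurable_exp.comp (hs_meas.const_mul _)).aestronglyMeasurable 1
    (ae_of_all _ fun x => norm_exp_neg_mul_le_one hl (hs x))

lemma norm_integral_exp_neg_mul_le [IsFiniteMeasure μ] (hl : 0 ≤ l) (hs : ∀ x, 0 ≤ s x) :
    ‖∫ x, exp (-l * s x) ∂μ‖ ≤ μ.real univ := by
  simpa using norm_integral_le_of_norm_le_const (μ := μ)
    (ae_of_all _ fun x => norm_exp_neg_mul_le_one hl (hs x))

end ExpNegMul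

theorem stmt1_general {X : Type*} [MeasurableSpace X] (C : ℝ)
    (S : ℕ → X → ℝ) (hSmeas : ∀ n, Measurable (S n))
    (hS : ∀ n x, 0 ≤ S n x ∧ S n x ≤ C * n)
    (lam : ℝ → ℝ) (hlamnn : ∀ t, 0 ≤ lam t)
    (ν : ℝ → Measure X) (hν : ∀ t, 0 < t → IsFiniteMeasure (ν t) ∧ ν t ≠ 0)
    (q : ℝ) (hq : 0 < q) :
    Tendsto (fun t =>
      (∑' n : ℕ, Real.exp (-(n : ℝ) * q / t) * ∫ x, Real.exp (-(lam t) * S n x) ∂(ν t)) /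
      (t * ∫ u in Set.Ioi (0:ℝ),
        Real.exp (-q * u) * ∫ x, Real.exp (-(lam t) * S ⌊u * t⌋₊ x) ∂(ν t)))
      atTop (𝓝 1) := by
  refine tendsto_tsum_div_integral_exp_neg_mul_comp_floor hq
    (fun t n => ∫ x, exp (-lam t * S n x) ∂ν t) (fun t ht => ?_) (fun t ht n => ?_)
  · have : IsFiniteMeasure (ν t) := (hν t ht).1
    exact ⟨_, fun n => norm_integral_exp_neg_mul_le (hlamnn t) (fun x => (hS n x).1)⟩
  · have : IsFiniteMeasure (ν t) := (hν t ht).1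
    have : NeZero (ν t) := ⟨(hν t ht).2⟩
    exact integral_exp_pos
      (integrable_exp_neg_mul (hlamnn t) (hSmeas n) fun x => (hS n x).1)

/-- Discretization lemma: the discrete double Laplace transform is asymptotically
equivalent to the continuous one. -/
theorem stmt1 {X : Type*} [MeasurableSpace X] (C : ℝ) (hC : 0 < C)
    (S : ℕ → X → ℝ) (hSmeas : ∀ n, Measurable (S n))
    (hS : ∀ n x, 0 ≤ S n x ∧ S n x ≤ C * n)
    (lam : ℝ → ℝ) (hlamnn : ∀ t, 0 ≤ lam t) (hlam : Tendsto lam atTop (𝓝 0))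
    (ν : ℝ → Measure X) (hν : ∀ t, 0 < t → IsFiniteMeasure (ν t) ∧ ν t ≠ 0)
    (q : ℝ) (hq : 0 < q) :
    Tendsto (fun t =>
      (∑' n : ℕ, Real.exp (-(n : ℝ) * q / t) * ∫ x, Real.exp (-(lam t) * S n x) ∂(ν t)) /
      (t * ∫ u in Set.Ioi (0:ℝ),
        Real.exp (-q * u) * ∫ x, Real.exp (-(lam t) * S ⌊u * t⌋₊ x) ∂(ν t)))
      atTop (𝓝 1) :=
  stmt1_general C S hSmeas hS lam hlamnn ν hν q hq
end

section
/- Let $T$ be a conservative ergodic measure-preserving transformation of a $\sigma$-finite space $(X,\mathcal{A},\mu)$ with $\mu(X)=\infty$, $Y\in\mathcal{A}$ with $0<\mu(Y)<\infty$, $\varphi$ the first return time to $Y$, $Y_0=Y$, $Y_n=Y^c\cap\{\varphi=n\}$, and $\hat T$ the transfer operator. For $s_1>0$, $s_2\ge0$, with $Q^Y(s)=\sum_{n\ge0}e^{-ns}\mu(Y\cap\{\varphi>n\})$ and $Z_n^Y(x)=\max\{k\le n:T^kx\in Y\}$, one has $\int_Y \big(\sum_{n\ge0}e^{-ns_1}e^{-s_2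 Z_n^Y}\big)\big(\sum_{n\ge0}e^{-n(s_1+s_2)}\hat T^n 1_{Y_n}\big)\,d\mu = Q^Y(s_1)/(1-e^{-(s_1+s_2)})$. -/
open MeasureTheory Filter Real Set
open scoped Topology ENNReal

/-!
Put `a = e^{-s₁}`, `b = e^{-s₂}` and `A = ∑ₘ aᵐ b^{Z_m}`. By duality the `n`-th term of the left
side is `(ab)ⁿ ∫_{Yₙ} A ∘ Tⁿ`. Points of `Yₙ` are in `Y` at time `n`, so `Z_{n+m} = n + Z_m ∘ Tⁿ`
there and the term becomes `∑ₘ ∫_{Yₙ} a^{n+m} b^{Z_{n+m}}`. Grouping by `j = n + m`, the sets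
`Y₀, …, Y_j` partition the points visiting `Y` before time `j`; so do the sets `{Z_j = k}`,
`k ≤ j`, and `{Z_j = k} = T^{-k}(Y ∩ {φ > j - k})` has measure `μ(Y ∩ {φ > j - k})`. What remains
is the Cauchy product of `∑ (ab)ᵏ = (1 - ab)⁻¹` with `Q^Y(s₁) = ∑ aⁱ μ(Y ∩ {φ > i})`.
-/

/-- First return time to `Y` (value `⊤` if the orbit never returns). -/
noncomputable def firstReturn {X : Type*} (T : X → X) (Y : Set X) (x : X) : ℕ∞ :=
  ⨅ (k : ℕ) (_ : 1 ≤ k ∧ T^[k] x ∈ Y), (k : ℕ∞)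

/-- The sets `Y₀ = Y`, `Yₙ = Yᶜ ∩ {φ = n}`. -/
noncomputable def Ypart {X : Type*} (T : X → X) (Y : Set X) : ℕ → Set X
  | 0 => Y
  | (n+1) => Yᶜ ∩ {x | firstReturn T Y x = ((n+1 : ℕ) : ℕ∞)}

/-- Laplace transform `Q^Y(s)` of the increments of the wandering rate. -/
noncomputable def QY {X : Type*} [MeasurableSpace X] (T : X → X) (Y : Set X)
    (μ : Measure X) (s : ℝ) : ℝ≥0∞ :=
  ∑' n : ℕ, ENNReal.ofReal (Real.exp (-(n : ℝ) * s)) *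
    μ (Y ∩ {x | (n : ℕ∞) < firstReturn T Y x})

/-- Last visit time to `Y` up to time `n` (with `max ∅ = 0`). -/
noncomputable def lastVisit {X : Type*} (T : X → X) (Y : Set X) (n : ℕ) (x : X) : ℕ :=
  sSup {k | k ≤ n ∧ T^[k] x ∈ Y}

/-- For `k ≤ j`, the points whose last visit to `Y` up to time `j` is at time `k`, written as a
preimage under `T^[k]` so that measure preservation computes its measure. -/
def lastVisitSet {X : Type*} (T : X → X) (Y : Set X) (j k : ℕ) : Set X :=
  T^[k] ⁻¹' (Y ∩ {y | ((j - k : ℕ) : ℕ∞) < firstReturn T Y y})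

section Orbit

variable {X : Type*} {T : X → X} {Y : Set X} {x : X}

lemma lt_firstReturn_iff {n : ℕ} :
    (n : ℕ∞) < firstReturn T Y x ↔ ∀ k, 1 ≤ k → k ≤ n → T^[k] x ∉ Y := by
  rw [← ENat.add_one_le_iff (ENat.natCast_ne_top n)]
  simp only [firstReturn, le_iInf_iff, and_imp]
  refine forall_congr' fun k => ⟨fun h hk hkn hkY => ?_, fun h hk hkY => ?_⟩
  · have := h hk hkY
    norm_cast at this
    omega
  · by_contra hlt
    exact h hk (by exact_mod_cast Order.le_of_lt_add_one (not_le.1 hlt)) hkY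

lemma firstReturn_eq_iff {n : ℕ} :
    firstReturn T Y x = ((n + 1 : ℕ) : ℕ∞) ↔
      T^[n + 1] x ∈ Y ∧ (n : ℕ∞) < firstReturn T Y x := by
  refine ⟨fun h => ?_, fun ⟨hY, hlt⟩ => ?_⟩
  · have hlt : (n : ℕ∞) < firstReturn T Y x := by rw [h]; exact_mod_cast n.lt_succ_self
    refine ⟨?_, hlt⟩
    by_contra hY
    have : ((n + 1 : ℕ) : ℕ∞) < firstReturn T Y x := by
      rw [lt_firstReturn_iff]
      intro k hk hkn hkY
      rcases hkn.lt_or_eq with hkn | rfl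
      · exact lt_firstReturn_iff.1 hlt k hk (by omega) hkY
      · exact hY hkY
    exact this.ne' h
  · exact le_antisymm (iInf₂_le (n + 1) ⟨n.succ_pos, hY⟩)
      (by exact_mod_cast (ENat.add_one_le_iff (ENat.natCast_ne_top n)).2 hlt)

lemma mem_Ypart_iff {n : ℕ} : x ∈ Ypart T Y n ↔ T^[n] x ∈ Y ∧ ∀ k < n, T^[k] x ∉ Y := by
  cases n with
  | zero => simp [Ypart]
  | succ n =>
    simp only [Ypart, mem_inter_iff, mem_compl_iff, mem_ofPred_eq, firstReturn_eq_iff,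
      lt_firstReturn_iff]
    constructor
    · rintro ⟨hx, hY, h⟩
      refine ⟨hY, fun k hk => ?_⟩
      rcases k with _ | k
      · exact hx
      · exact h (k + 1) (by omega) (by omega)
    · rintro ⟨hY, h⟩
      exact ⟨h 0 n.succ_pos, hY, fun k _ hkn => h k (by omega)⟩

lemma pairwise_disjoint_Ypart : Pairwise (Function.onFun Disjoint (Ypart T Y)) := by
  intro n m hnm
  wlog hlt : n < m generalizing n m
  · exact (this hnm.symm (by omega)).symm
  exact Set.disjoint_left.2 fun x hn hm =>
    (mem_Ypart_iff.1 hm).2 n hlt (mem_Ypart_iff.1 hn).1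

lemma biUnion_range_Ypart (j : ℕ) :
    ⋃ n ∈ Finset.range (j + 1), Ypart T Y n = {x | ∃ k ≤ j, T^[k] x ∈ Y} := by
  ext x
  simp only [mem_iUnion, Finset.mem_range, mem_ofPred_eq, exists_prop]
  constructor
  · rintro ⟨n, hn, hx⟩
    exact ⟨n, by omega, (mem_Ypart_iff.1 hx).1⟩
  · classical
    rintro h
    have hex : ∃ k, T^[k] x ∈ Y := h.imp fun _ => And.right
    refine ⟨Nat.find hex, ?_, mem_Ypart_iff.2 ⟨Nat.find_spec hex, fun k => Nat.find_min hex⟩⟩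
    obtain ⟨k, hk, hkY⟩ := h
    have := Nat.find_min' hex hkY
    omega

lemma le_lastVisit {n k : ℕ} (hk : k ≤ n) (hkY : T^[k] x ∈ Y) : k ≤ lastVisit T Y n x :=
  le_csSup ⟨n, fun _ hl => hl.1⟩ ⟨hk, hkY⟩

lemma lastVisit_le_and_mem {n : ℕ} (h : ∃ k ≤ n, T^[k] x ∈ Y) :
    lastVisit T Y n x ≤ n ∧ T^[lastVisit T Y n x] x ∈ Y :=
  Nat.sSup_mem h ⟨n, fun _ hl => hl.1⟩

lemma lastVisit_eq_of_forall {n k : ℕ} (hk : k ≤ n) (hkY : T^[k] x ∈ Y)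
    (h : ∀ l, k < l → l ≤ n → T^[l] x ∉ Y) : lastVisit T Y n x = k :=
  IsGreatest.csSup_eq ⟨⟨hk, hkY⟩, fun l ⟨hl, hlY⟩ => not_lt.1 fun hkl => h l hkl hl hlY⟩

lemma lastVisit_add_of_mem {n : ℕ} (h : T^[n] x ∈ Y) (m : ℕ) :
    lastVisit T Y (n + m) x = n + lastVisit T Y m (T^[n] x) := by
  obtain ⟨hle, hmem⟩ := lastVisit_le_and_mem (T := T) (x := T^[n] x) ⟨0, m.zero_le, h⟩
  refine lastVisit_eq_of_forall (by omega) (by rwa [add_comm, Function.iterate_add_apply]) ?_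
  intro l hl hlm hlY
  have := le_lastVisit (T := T) (x := T^[n] x) (n := m) (k := l - n) (by omega)
    (by rwa [← Function.iterate_add_apply, Nat.sub_add_cancel (by omega)])
  omega

lemma mem_lastVisitSet_iff {j k : ℕ} (hk : k ≤ j) :
    x ∈ lastVisitSet T Y j k ↔
      T^[k] x ∈ Y ∧ ∀ l, k < l → l ≤ j → T^[l] x ∉ Y := by
  simp only [lastVisitSet, mem_preimage, mem_inter_iff, mem_ofPred_eq, lt_firstReturn_iff,
    ← Function.iterate_add_apply]
  refine and_congr_right fun _ =>
    ⟨fun h l hkl hlj => ?_, fun h i hi hij => h _ (by omega) (by omega)⟩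
  simpa [Nat.sub_add_cancel hkl.le] using h (l - k) (by omega) (by omega)

lemma lastVisit_eq_of_mem_lastVisitSet {j k : ℕ} (hk : k ≤ j)
    (hx : x ∈ lastVisitSet T Y j k) :
    lastVisit T Y j x = k :=
  ((mem_lastVisitSet_iff hk).1 hx).elim (lastVisit_eq_of_forall hk)

lemma biUnion_range_lastVisitSet (j : ℕ) :
    ⋃ k ∈ Finset.range (j + 1), lastVisitSet T Y j k =
      {x | ∃ k ≤ j, T^[k] x ∈ Y} := by
  ext x
  simp only [mem_iUnion, Finset.mem_range, mem_ofPred_eq, exists_prop]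
  constructor
  · rintro ⟨k, hk, hx⟩
    exact ⟨k, by omega, ((mem_lastVisitSet_iff (by omega)).1 hx).1⟩
  · rintro h
    obtain ⟨hle, hmem⟩ := lastVisit_le_and_mem h
    refine ⟨_, by omega, (mem_lastVisitSet_iff hle).2 ⟨hmem, ?_⟩⟩
    exact fun l hl hlj hlY => (le_lastVisit hlj hlY).not_gt hl

lemma lastVisit_eq_sup' [DecidablePred (· ∈ Y)] (n : ℕ) (x : X) :
    lastVisit T Y n x = (Finset.range (n + 1)).sup' Finset.nonempty_range_add_one
      fun k => if T^[k] x ∈ Y then k else 0 := by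
  refine le_antisymm (csSup_le' fun k ⟨hk, hkY⟩ => ?_) (Finset.sup'_le _ _ fun k hk => ?_)
  · exact Finset.le_sup'_of_le _ (b := k) (Finset.mem_range.2 (by omega)) (by simp [hkY])
  · split_ifs with hkY
    exacts [le_lastVisit (Finset.mem_range_succ_iff.1 hk) hkY, Nat.zero_le _]

lemma tsum_pow_mul_pow_lastVisit_iterate {x : X} {n : ℕ} (h : T^[n] x ∈ Y) (a b : ℝ≥0∞) :
    (a * b) ^ n * ∑' m, a ^ m * b ^ lastVisit T Y m (T^[n] x) =
      ∑' m, a ^ (n + m) * b ^ lastVisit T Y (n + m) x := by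
  rw [← ENNReal.tsum_mul_left]
  refine tsum_congr fun m => ?_
  rw [lastVisit_add_of_mem h, pow_add, pow_add, mul_pow]
  ring

end Orbit

section Measurability

variable {X : Type*} [MeasurableSpace X] {T : X → X} {Y : Set X}

lemma measurableSet_lt_firstReturn (hT : Measurable T) (hY : MeasurableSet Y) (n : ℕ) :
    MeasurableSet {x | (n : ℕ∞) < firstReturn T Y x} := by
  simp only [lt_firstReturn_iff, ofPred_forall]
  exact .iInter fun k => .iInter fun _ => .iInter fun _ => hT.iterate k hY.compl

lemma measurableSet_Ypart (hT : Measurable T) (hY : MeasurableSet Y) (n : ℕ) :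
    MeasurableSet (Ypart T Y n) := by
  have : Ypart T Y n = T^[n] ⁻¹' Y ∩ ⋂ k < n, T^[k] ⁻¹' Yᶜ := by
    ext x
    simp [mem_Ypart_iff]
  rw [this]
  exact (hT.iterate n hY).inter (.biInter (to_countable _) fun k _ => hT.iterate k hY.compl)

lemma measurableSet_lastVisitSet (hT : Measurable T) (hY : MeasurableSet Y) (j k : ℕ) :
    MeasurableSet (lastVisitSet T Y j k) :=
  hT.iterate k (hY.inter (measurableSet_lt_firstReturn hT hY _))

lemma measure_lastVisitSet {μ : Measure X} (hT : MeasurePreserving T μ μ) (hY : MeasurableSet Y)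
    (j k : ℕ) :
    μ (lastVisitSet T Y j k) = μ (Y ∩ {y | ((j - k : ℕ) : ℕ∞) < firstReturn T Y y}) :=
  (hT.iterate k).measure_preimage
    (hY.inter (measurableSet_lt_firstReturn hT.measurable hY _)).nullMeasurableSet

lemma measurable_lastVisit (hT : Measurable T) (hY : MeasurableSet Y) (n : ℕ) :
    Measurable (lastVisit T Y n) := by
  classical
  simp_rw [funext (lastVisit_eq_sup' (T := T) (Y := Y) n)]
  exact Finset.measurable_range_sup'' fun k _ =>
    Measurable.ite (hT.iterate k hY) measurable_const measurable_const

end Measurability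

section Transfer

variable {X : Type*} [MeasurableSpace X] {μ : Measure X} {T : X → X}
  {L : (X → ℝ≥0∞) → (X → ℝ≥0∞)}

lemma measurable_iterate_apply (hL : ∀ u, Measurable u → Measurable (L u)) (n : ℕ)
    {u : X → ℝ≥0∞} (hu : Measurable u) : Measurable (L^[n] u) :=
  Function.Iterate.rec (fun u => Measurable u) hu hL n

lemma lintegral_comp_iterate_mul (hT : Measurable T)
    (hL : ∀ u, Measurable u → Measurable (L u))
    (hdual : ∀ u v : X → ℝ≥0∞, Measurable u → Measurable v →
      ∫⁻ x, v (T x) * u x ∂μ = ∫⁻ x, v x * L u x ∂μ)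
    (n : ℕ) {u v : X → ℝ≥0∞} (hu : Measurable u) (hv : Measurable v) :
    ∫⁻ x, v (T^[n] x) * u x ∂μ = ∫⁻ x, v x * L^[n] u x ∂μ := by
  induction n generalizing u with
  | zero => rfl
  | succ n ih =>
    simp only [Function.iterate_succ_apply]
    exact (hdual u _ hu (hv.comp (hT.iterate n))).trans (ih (hL u hu))

lemma lintegral_mul_iterate_indicator_one (hT : Measurable T)
    (hL : ∀ u, Measurable u → Measurable (L u))
    (hdual : ∀ u v : X → ℝ≥0∞, Measurable u → Measurable v →
      ∫⁻ x, v (T x) * u x ∂μ = ∫⁻ x, v x * L u x ∂μ)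
    (n : ℕ) {s : Set X} (hs : MeasurableSet s) {v : X → ℝ≥0∞} (hv : Measurable v) :
    ∫⁻ x, v x * L^[n] (s.indicator fun _ => 1) x ∂μ = ∫⁻ x in s, v (T^[n] x) ∂μ := by
  rw [← lintegral_comp_iterate_mul hT hL hdual n (measurable_const.indicator hs) hv,
    ← lintegral_indicator hs]
  congr with x
  by_cases hx : x ∈ s <;> simp [hx]

end Transfer

namespace ENNReal

lemma tsum_prod_eq_tsum_sum_antidiagonal (f : ℕ × ℕ → ℝ≥0∞) :
    ∑' p, f p = ∑' n, ∑ p ∈ Finset.HasAntidiagonal.antidiagonal n, f p := by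
  rw [← Finset.HasAntidiagonal.sigmaAntidiagonalEquivProd.tsum_eq, ENNReal.tsum_sigma']
  exact tsum_congr fun n => Finset.tsum_subtype _ _

lemma tsum_tsum_add_eq_tsum_sum_range (c : ℕ → ℕ → ℝ≥0∞) :
    ∑' n, ∑' m, c n (n + m) = ∑' j, ∑ n ∈ Finset.range (j + 1), c n j := by
  rw [← ENNReal.tsum_prod, ENNReal.tsum_prod_eq_tsum_sum_antidiagonal]
  refine tsum_congr fun j => ?_
  rw [Finset.sum_congr rfl fun p hp => by rw [Finset.HasAntidiagonal.mem_antidiagonal.1 hp],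
    Finset.Nat.sum_antidiagonal_eq_sum_range_succ_mk]

lemma tsum_mul_tsum_eq_tsum_sum_range (f g : ℕ → ℝ≥0∞) :
    (∑' n, f n) * ∑' n, g n = ∑' j, ∑ k ∈ Finset.range (j + 1), f k * g (j - k) := by
  rw [← tsum_tsum_add_eq_tsum_sum_range, ← ENNReal.tsum_mul_right]
  refine tsum_congr fun k => ?_
  simp only [Nat.add_sub_cancel_left, ENNReal.tsum_mul_left]

end ENNReal

section LaplaceTransform

variable {X : Type*} [MeasurableSpace X] {μ : Measure X} {T : X → X} {Y : Set X}

lemma sum_setLIntegral_Ypart_comp_lastVisit (hT : MeasurePreserving T μ μ)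
    (hY : MeasurableSet Y) (f : ℕ → ℝ≥0∞) (j : ℕ) :
    ∑ n ∈ Finset.range (j + 1), ∫⁻ x in Ypart T Y n, f (lastVisit T Y j x) ∂μ =
      ∑ k ∈ Finset.range (j + 1),
        f k * μ (Y ∩ {y | ((j - k : ℕ) : ℕ∞) < firstReturn T Y y}) := by
  have hdisj : (Finset.range (j + 1) : Set ℕ).PairwiseDisjoint (lastVisitSet T Y j) :=
    fun k hk l hl hkl => Set.disjoint_left.2 fun x hxk hxl => hkl <|
      (lastVisit_eq_of_mem_lastVisitSet (Finset.mem_range_succ_iff.1 hk) hxk).symm.trans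
        (lastVisit_eq_of_mem_lastVisitSet (Finset.mem_range_succ_iff.1 hl) hxl)
  rw [← lintegral_biUnion_finset (pairwise_disjoint_Ypart.set_pairwise _)
      (fun n _ => measurableSet_Ypart hT.measurable hY n),
    biUnion_range_Ypart, ← biUnion_range_lastVisitSet,
    lintegral_biUnion_finset hdisj fun k _ => measurableSet_lastVisitSet hT.measurable hY j k]
  refine Finset.sum_congr rfl fun k hk => ?_
  rw [setLIntegral_congr_fun (measurableSet_lastVisitSet hT.measurable hY j k) fun x hx => by
      rw [lastVisit_eq_of_mem_lastVisitSet (Finset.mem_range_succ_iff.1 hk) hx],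
    setLIntegral_const, measure_lastVisitSet hT hY]

variable {L : (X → ℝ≥0∞) → (X → ℝ≥0∞)}

lemma setLIntegral_mul_tsum_transfer_Ypart (hT : Measurable T) (hY : MeasurableSet Y)
    (hL : ∀ u, Measurable u → Measurable (L u))
    (hdual : ∀ u v : X → ℝ≥0∞, Measurable u → Measurable v →
      ∫⁻ x, v (T x) * u x ∂μ = ∫⁻ x, v x * L u x ∂μ)
    {A : X → ℝ≥0∞} (hA : Measurable A) (c : ℝ≥0∞) :
    ∫⁻ x in Y, A x * ∑' n, c ^ n * L^[n] ((Ypart T Y n).indicator fun _ => 1) x ∂μ =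
      ∑' n, c ^ n * ∫⁻ x in Ypart T Y n, A (T^[n] x) ∂μ := by
  have hu (n : ℕ) : Measurable ((Ypart T Y n).indicator fun _ => (1 : ℝ≥0∞)) :=
    measurable_const.indicator (measurableSet_Ypart hT hY n)
  calc ∫⁻ x in Y, A x * ∑' n, c ^ n * L^[n] ((Ypart T Y n).indicator fun _ => 1) x ∂μ
      = ∫⁻ x, ∑' n, c ^ n * (Y.indicator A x * L^[n] ((Ypart T Y n).indicator fun _ => 1) x)
          ∂μ := by
        rw [← lintegral_indicator hY]
        congr with x
        by_cases hx : x ∈ Y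
        · simp only [indicator_of_mem hx, ← ENNReal.tsum_mul_left, mul_left_comm]
        · simp [indicator_of_notMem hx]
    _ = ∑' n, c ^ n * ∫⁻ x, Y.indicator A x * L^[n] ((Ypart T Y n).indicator fun _ => 1) x ∂μ := by
        rw [lintegral_tsum (f := fun n x => c ^ n * (Y.indicator A x *
          L^[n] ((Ypart T Y n).indicator fun _ => 1) x)) fun n => (((hA.indicator hY).mul
          (measurable_iterate_apply hL n (hu n))).const_mul _).aemeasurable]
        exact tsum_congr fun n => lintegral_const_mul _
          ((hA.indicator hY).mul (measurable_iterate_apply hL n (hu n)))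
    _ = ∑' n, c ^ n * ∫⁻ x in Ypart T Y n, A (T^[n] x) ∂μ := by
        refine tsum_congr fun n => ?_
        rw [lintegral_mul_iterate_indicator_one hT hL hdual n (measurableSet_Ypart hT hY n)
          (hA.indicator hY)]
        exact congrArg _ (setLIntegral_congr_fun (measurableSet_Ypart hT hY n) fun x hx =>
          indicator_of_mem (mem_Ypart_iff.1 hx).1 A)

theorem setLIntegral_tsum_lastVisit_mul_tsum_transfer (hT : MeasurePreserving T μ μ)
    (hY : MeasurableSet Y) (hL : ∀ u, Measurable u → Measurable (L u))
    (hdual : ∀ u v : X → ℝ≥0∞, Measurable u → Measurable v →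
      ∫⁻ x, v (T x) * u x ∂μ = ∫⁻ x, v x * L u x ∂μ) (a b : ℝ≥0∞) :
    ∫⁻ x in Y, (∑' n, a ^ n * b ^ lastVisit T Y n x) *
        ∑' n, (a * b) ^ n * L^[n] ((Ypart T Y n).indicator fun _ => 1) x ∂μ =
      (∑' n : ℕ, a ^ n * μ (Y ∩ {x | (n : ℕ∞) < firstReturn T Y x})) / (1 - a * b) := by
  have hg (j : ℕ) : Measurable fun x => a ^ j * b ^ lastVisit T Y j x :=
    (measurable_from_top.comp (measurable_lastVisit hT.measurable hY j)).const_mul _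
  have hA : Measurable fun x => ∑' m, a ^ m * b ^ lastVisit T Y m x := Measurable.tsum hg
  calc _ = ∑' n, (a * b) ^ n * ∫⁻ x in Ypart T Y n,
          ∑' m, a ^ m * b ^ lastVisit T Y m (T^[n] x) ∂μ :=
        setLIntegral_mul_tsum_transfer_Ypart hT.measurable hY hL hdual hA _
    _ = ∑' n, ∑' m, ∫⁻ x in Ypart T Y n, a ^ (n + m) * b ^ lastVisit T Y (n + m) x ∂μ := by
        refine tsum_congr fun n => ?_
        rw [← lintegral_const_mul (f := fun x => ∑' m, a ^ m * b ^ lastVisit T Y m (T^[n] x)) _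
            (hA.comp (hT.measurable.iterate n)),
          setLIntegral_congr_fun (measurableSet_Ypart hT.measurable hY n) fun x hx =>
            tsum_pow_mul_pow_lastVisit_iterate (mem_Ypart_iff.1 hx).1 a b,
          lintegral_tsum fun m => (hg (n + m)).aemeasurable]
    _ = ∑' j, ∑ k ∈ Finset.range (j + 1),
          (a * b) ^ k * (a ^ (j - k) * μ (Y ∩ {y | ((j - k : ℕ) : ℕ∞) < firstReturn T Y y})) := by
        rw [ENNReal.tsum_tsum_add_eq_tsum_sum_range
          fun n j => ∫⁻ x in Ypart T Y n, a ^ j * b ^ lastVisit T Y j x ∂μ]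
        refine tsum_congr fun j => ?_
        rw [sum_setLIntegral_Ypart_comp_lastVisit hT hY (fun k => a ^ j * b ^ k)]
        refine Finset.sum_congr rfl fun k hk => ?_
        rw [← pow_sub_mul_pow a (Finset.mem_range_succ_iff.1 hk), mul_pow]
        ring
    _ = _ := by
        rw [← ENNReal.tsum_mul_tsum_eq_tsum_sum_range (fun k => (a * b) ^ k)
            fun i => a ^ i * μ (Y ∩ {y | (i : ℕ∞) < firstReturn T Y y}),
          ENNReal.tsum_geometric, div_eq_mul_inv, mul_comm]

end LaplaceTransform

lemma ofReal_exp_mul_natCast (t : ℝ) (n : ℕ) :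
    ENNReal.ofReal (Real.exp (t * n)) = ENNReal.ofReal (Real.exp t) ^ n := by
  rw [← ENNReal.ofReal_pow (Real.exp_nonneg _), ← Real.exp_nat_mul, mul_comm]

theorem stmt4_general {X : Type*} [MeasurableSpace X] {μ : Measure X}
    {T : X → X} (herg : Ergodic T μ)
    {Y : Set X} (hYm : MeasurableSet Y)
    (hatT : (X → ℝ≥0∞) → (X → ℝ≥0∞))
    (hatTmeas : ∀ u, Measurable u → Measurable (hatT u))
    (hatTdual : ∀ u v : X → ℝ≥0∞, Measurable u → Measurable v →
      ∫⁻ x, v (T x) * u x ∂μ = ∫⁻ x, v x * hatT u x ∂μ)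
    (s1 s2 : ℝ) :
    ∫⁻ x in Y,
      (∑' n : ℕ, ENNReal.ofReal (Real.exp (-(n : ℝ) * s1)) *
        ENNReal.ofReal (Real.exp (-s2 * lastVisit T Y n x))) *
      (∑' n : ℕ, ENNReal.ofReal (Real.exp (-(n : ℝ) * (s1 + s2))) *
        (hatT^[n] ((Ypart T Y n).indicator fun _ => (1:ℝ≥0∞))) x) ∂μ
    = QY T Y μ s1 / (1 - ENNReal.ofReal (Real.exp (-(s1 + s2)))) := by
  have hpow (s : ℝ) (n : ℕ) :
      ENNReal.ofReal (Real.exp (-(n : ℝ) * s)) = ENNReal.ofReal (Real.exp (-s)) ^ n := by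
    rw [← ofReal_exp_mul_natCast]
    ring_nf
  have hmul : ENNReal.ofReal (Real.exp (-(s1 + s2))) =
      ENNReal.ofReal (Real.exp (-s1)) * ENNReal.ofReal (Real.exp (-s2)) := by
    rw [neg_add, Real.exp_add, ENNReal.ofReal_mul (Real.exp_nonneg _)]
  simp only [QY, hpow, ofReal_exp_mul_natCast, hmul]
  exact setLIntegral_tsum_lastVisit_mul_tsum_transfer herg.toMeasurePreserving hYm hatTmeas
    hatTdual _ _

/-- Double Laplace transform identity for the waiting time `Z_n^Y`. -/
theorem stmt4 {X : Type*} [MeasurableSpace X] {μ : Measure X} [SigmaFinite μ]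
    {T : X → X} (hcons : Conservative T μ) (herg : Ergodic T μ)
    (hinf : μ Set.univ = ⊤) {Y : Set X} (hYm : MeasurableSet Y)
    (hY0 : 0 < μ Y) (hY1 : μ Y < ⊤)
    (hatT : (X → ℝ≥0∞) → (X → ℝ≥0∞))
    (hatTmeas : ∀ u, Measurable u → Measurable (hatT u))
    (hatTdual : ∀ u v : X → ℝ≥0∞, Measurable u → Measurable v →
      ∫⁻ x, v (T x) * u x ∂μ = ∫⁻ x, v x * hatT u x ∂μ)
    (s1 s2 : ℝ) (hs1 : 0 < s1) (hs2 : 0 ≤ s2) :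
    ∫⁻ x in Y,
      (∑' n : ℕ, ENNReal.ofReal (Real.exp (-(n : ℝ) * s1)) *
        ENNReal.ofReal (Real.exp (-s2 * lastVisit T Y n x))) *
      (∑' n : ℕ, ENNReal.ofReal (Real.exp (-(n : ℝ) * (s1 + s2))) *
        (hatT^[n] ((Ypart T Y n).indicator fun _ => (1:ℝ≥0∞))) x) ∂μ
    = QY T Y μ s1 / (1 - ENNReal.ofReal (Real.exp (-(s1 + s2)))) :=
  stmt4_general herg hYm hatT hatTmeas hatTdual s1 s2
end

section
/- Let $T$ be a CEMPT on $(X,\mathcal{A},\mu)$ and fix $t_0>0$, $K\in\mathbb{N}_0$. Suppose $\{H_t\}_{t>0}\cup\{G\}$ are nonnegative $L^1(\mu)$ functions such that there is $C_0>0$ with $C_0\sum_{k=0}^K\hat T^k H_t\ge G$ a.e. for all $t\ge t_0$ (uniform sweeping). Suppose $R_{n,t}:X\to(0,1]$ are measurable with $\sup\{\|R_{n,t}\circ T^k / R_{n+k,t}\|_{L^\infty(\mu)}: n\in\mathbb{N}_0, 0\le k\le K, t\ge t_0\}<\infty$. Then for any $q>0$, $\sup_{t\ge t_0}\,\big(\sum_{n\ge0}e^{-nq/t}\int_X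 R_{n,t}G\,d\mu\big)\big/\big(\sum_{n\ge0}e^{-nq/t}\int_X R_{n,t}H_t\,d\mu\big)<\infty$. -/
/-!
Pair `G` against the weight `R_{n,t}`. Uniform sweeping bounds `∫ R_{n,t} G` by the integrals
`∫ R_{n,t} T̂ᵏ H_t`, which duality turns into `∫ (R_{n,t} ∘ Tᵏ) H_t`, and the ratio bound replaces
`R_{n,t} ∘ Tᵏ` by `R_{n+k,t}`. Summing against `e^{-nq/t}` only shifts the index by `k ≤ K`,
which costs at most the factor `e^{Kq/t₀}` uniformly in `t ≥ t₀`.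
-/

open MeasureTheory Real
open scoped ENNReal

section TransferOperator

variable {X : Type*} [MeasurableSpace X]

structure IsTransferOperator (μ : Measure X) (T : X → X) (P : (X → ℝ≥0∞) → (X → ℝ≥0∞)) :
    Prop where
  measurable : ∀ u, Measurable u → Measurable (P u)
  lintegral_comp_mul : ∀ u v : X → ℝ≥0∞, Measurable u → Measurable v →
    ∫⁻ x, v (T x) * u x ∂μ = ∫⁻ x, v x * P u x ∂μ

variable {μ : Measure X} {T : X → X} {P : (X → ℝ≥0∞) → (X → ℝ≥0∞)}

theorem IsTransferOperator.iterate (hT : Measurable T) (hP : IsTransferOperator μ T P) (k : ℕ) :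
    IsTransferOperator μ T^[k] P^[k] := by
  induction k with
  | zero => exact ⟨fun u hu => hu, fun u v _ _ => rfl⟩
  | succ k ih =>
    refine ⟨fun u hu => ih.measurable _ (hP.measurable u hu), fun u v hu hv => ?_⟩
    simp only [Function.iterate_succ_apply]
    rw [hP.lintegral_comp_mul u (fun y => v (T^[k] y)) hu (hv.comp (hT.iterate k)),
      ih.lintegral_comp_mul _ v (hP.measurable u hu) hv]

theorem lintegral_mul_le_of_sweeping (hT : Measurable T) (hP : IsTransferOperator μ T P)
    {K : ℕ} {C c : ℝ≥0∞} {G h : X → ℝ≥0∞} {ρ : ℕ → X → ℝ≥0∞}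
    (hh : Measurable h) (hρ : ∀ n, Measurable (ρ n))
    (hsweep : ∀ᵐ x ∂μ, G x ≤ C * ∑ k ∈ Finset.range (K + 1), P^[k] h x)
    (hratio : ∀ n k, k ≤ K → ∀ᵐ x ∂μ, ρ n (T^[k] x) ≤ c * ρ (n + k) x) (n : ℕ) :
    ∫⁻ x, ρ n x * G x ∂μ ≤
      C * c * ∑ k ∈ Finset.range (K + 1), ∫⁻ x, ρ (n + k) x * h x ∂μ := by
  have hmeas : ∀ k, Measurable fun x => ρ n x * P^[k] h x := fun k =>
    (hρ n).mul ((hP.iterate hT k).measurable h hh)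
  calc ∫⁻ x, ρ n x * G x ∂μ
      ≤ ∫⁻ x, C * ∑ k ∈ Finset.range (K + 1), ρ n x * P^[k] h x ∂μ := by
        refine lintegral_mono_ae (hsweep.mono fun x hx => ?_)
        rw [← Finset.mul_sum, mul_left_comm]
        exact mul_le_mul_right hx _
    _ = C * ∑ k ∈ Finset.range (K + 1), ∫⁻ x, ρ n (T^[k] x) * h x ∂μ := by
        rw [lintegral_const_mul _ (Finset.measurable_sum _ fun k _ => hmeas k),
          lintegral_finsetSum _ fun k _ => hmeas k]
        congr 1
        refine Finset.sum_congr rfl fun k _ => ?_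
        exact ((hP.iterate hT k).lintegral_comp_mul h (ρ n) hh (hρ n)).symm
    _ ≤ C * ∑ k ∈ Finset.range (K + 1), c * ∫⁻ x, ρ (n + k) x * h x ∂μ := by
        gcongr with k hk
        rw [← lintegral_const_mul (f := fun x => ρ (n + k) x * h x) _ ((hρ _).mul hh)]
        refine lintegral_mono_ae ((hratio n k (Nat.lt_succ_iff.mp
          (Finset.mem_range.mp hk))).mono fun x hx => ?_)
        rw [← mul_assoc]
        exact mul_le_mul_left hx _
    _ = C * c * ∑ k ∈ Finset.range (K + 1), ∫⁻ x, ρ (n + k) x * h x ∂μ := by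
        simp only [Finset.mul_sum, mul_assoc]

end TransferOperator

theorem tsum_mul_le_of_le_sum_shift {K : ℕ} {a I J : ℕ → ℝ≥0∞} {D E : ℝ≥0∞}
    (ha : ∀ n k, k ≤ K → a n ≤ E * a (n + k))
    (hI : ∀ n, I n ≤ D * ∑ k ∈ Finset.range (K + 1), J (n + k)) :
    ∑' n, a n * I n ≤ D * (K + 1) * E * ∑' n, a n * J n := by
  have hshift : ∀ k ≤ K, ∑' n, a n * J (n + k) ≤ E * ∑' n, a n * J n := fun k hk =>
    calc ∑' n, a n * J (n + k)
        ≤ ∑' n, E * (a (n + k) * J (n + k)) :=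
          ENNReal.tsum_le_tsum fun n => by
            rw [← mul_assoc]; exact mul_le_mul_left (ha n k hk) _
      _ = E * ∑' n, a (n + k) * J (n + k) := ENNReal.tsum_mul_left
      _ ≤ E * ∑' n, a n * J n :=
          mul_le_mul_right (ENNReal.tsum_comp_le_tsum_of_injective (add_left_injective k) _) E
  calc ∑' n, a n * I n
      ≤ ∑' n, D * ∑ k ∈ Finset.range (K + 1), a n * J (n + k) :=
        ENNReal.tsum_le_tsum fun n => by
          rw [← Finset.mul_sum, mul_left_comm]
          exact mul_le_mul_right (hI n) _
    _ = D * ∑ k ∈ Finset.range (K + 1), ∑' n, a n * J (n + k) := by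
        rw [ENNReal.tsum_mul_left, Summable.tsum_finsetSum fun k _ => ENNReal.summable]
    _ ≤ D * ∑ _k ∈ Finset.range (K + 1), E * ∑' n, a n * J n := by
        gcongr with k hk
        exact hshift k (Nat.lt_succ_iff.mp (Finset.mem_range.mp hk))
    _ = D * (K + 1) * E * ∑' n, a n * J n := by
        rw [Finset.sum_const, Finset.card_range, nsmul_eq_mul]
        push_cast
        ring

theorem ofReal_exp_neg_mul_div_le {t₀ t q : ℝ} (ht₀ : 0 < t₀) (ht : t₀ ≤ t) (hq : 0 ≤ q)
    {K k : ℕ} (hk : k ≤ K) (n : ℕ) :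
    ENNReal.ofReal (exp (-(n : ℝ) * q / t)) ≤
      ENNReal.ofReal (exp (K * q / t₀)) * ENNReal.ofReal (exp (-((n + k : ℕ) : ℝ) * q / t)) := by
  rw [← ENNReal.ofReal_mul (exp_pos _).le, ← exp_add]
  gcongr
  have hkq : (k : ℝ) * q / t ≤ K * q / t₀ :=
    calc (k : ℝ) * q / t ≤ K * q / t := by gcongr; linarith
      _ ≤ K * q / t₀ := by gcongr
  have hsplit : -(n : ℝ) * q / t = k * q / t + -((n + k : ℕ) : ℝ) * q / t := by
    push_cast; ring
  linarith

theorem stmt7_general {X : Type*} [MeasurableSpace X] {μ : Measure X}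
    {T : X → X} (hcons : Conservative T μ)
    (hatT : (X → ℝ≥0∞) → (X → ℝ≥0∞))
    (hatTmeas : ∀ u, Measurable u → Measurable (hatT u))
    (hatTdual : ∀ u v : X → ℝ≥0∞, Measurable u → Measurable v →
      ∫⁻ x, v (T x) * u x ∂μ = ∫⁻ x, v x * hatT u x ∂μ)
    (t0 : ℝ) (ht0 : 0 < t0) (K : ℕ)
    (H : ℝ → X → ℝ≥0∞) (G : X → ℝ≥0∞)
    (hHmeas : ∀ t, Measurable (H t))
    (C0 : ℝ≥0∞) (hC0 : C0 ≠ ⊤)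
    (hsweep : ∀ t, t0 ≤ t → ∀ᵐ x ∂μ,
      G x ≤ C0 * ∑ k ∈ Finset.range (K + 1), (hatT^[k] (H t)) x)
    (R : ℕ → ℝ → X → ℝ) (hRmeas : ∀ n t, Measurable (R n t))
    (hR : ∀ n t x, 0 < R n t x ∧ R n t x ≤ 1)
    (B : ℝ) (hB : ∀ (n k : ℕ) (t : ℝ), k ≤ K → t0 ≤ t →
      ∀ᵐ x ∂μ, R n t (T^[k] x) ≤ B * R (n + k) t x)
    (q : ℝ) (hq : 0 < q) :
    ∃ M : ℝ≥0∞, M ≠ ⊤ ∧ ∀ t, t0 ≤ t →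
      (∑' n : ℕ, ENNReal.ofReal (Real.exp (-(n : ℝ) * q / t)) *
        ∫⁻ x, ENNReal.ofReal (R n t x) * G x ∂μ) /
      (∑' n : ℕ, ENNReal.ofReal (Real.exp (-(n : ℝ) * q / t)) *
        ∫⁻ x, ENNReal.ofReal (R n t x) * H t x ∂μ) ≤ M := by
  refine ⟨C0 * ENNReal.ofReal B * (K + 1) * ENNReal.ofReal (exp (K * q / t0)),
    by finiteness, fun t ht => ENNReal.div_le_of_le_mul ?_⟩
  have hratio : ∀ n k, k ≤ K → ∀ᵐ x ∂μ,
      ENNReal.ofReal (R n t (T^[k] x)) ≤ ENNReal.ofReal B * ENNReal.ofReal (R (n + k) t x) :=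
    fun n k hk => (hB n k t hk ht).mono fun x hx =>
      (ENNReal.ofReal_le_ofReal hx).trans_eq (ENNReal.ofReal_mul' (hR _ t x).1.le)
  exact tsum_mul_le_of_le_sum_shift
    (fun n k hk => ofReal_exp_neg_mul_div_le ht0 ht hq.le hk n)
    (lintegral_mul_le_of_sweeping hcons.measurable ⟨hatTmeas, hatTdual⟩ (hHmeas t)
      (fun n => (hRmeas n t).ennreal_ofReal) (hsweep t ht) hratio)

/-- Integrating transforms: if `{H_t}` is uniformly sweeping for `G` and the `R_{n,t}`
satisfy a uniform ratio bound, then the ratio of the double transforms is bounded in `t`. -/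
theorem stmt7 {X : Type*} [MeasurableSpace X] {μ : Measure X} [SigmaFinite μ]
    {T : X → X} (hcons : Conservative T μ) (herg : Ergodic T μ)
    (hatT : (X → ℝ≥0∞) → (X → ℝ≥0∞))
    (hatTmeas : ∀ u, Measurable u → Measurable (hatT u))
    (hatTdual : ∀ u v : X → ℝ≥0∞, Measurable u → Measurable v →
      ∫⁻ x, v (T x) * u x ∂μ = ∫⁻ x, v x * hatT u x ∂μ)
    (t0 : ℝ) (ht0 : 0 < t0) (K : ℕ)
    (H : ℝ → X → ℝ≥0∞) (G : X → ℝ≥0∞)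
    (hHmeas : ∀ t, Measurable (H t)) (hGmeas : Measurable G)
    (hHint : ∀ t, ∫⁻ x, H t x ∂μ < ⊤) (hGint : ∫⁻ x, G x ∂μ < ⊤)
    (C0 : ℝ≥0∞) (hC0 : C0 ≠ ⊤)
    (hsweep : ∀ t, t0 ≤ t → ∀ᵐ x ∂μ,
      G x ≤ C0 * ∑ k ∈ Finset.range (K + 1), (hatT^[k] (H t)) x)
    (R : ℕ → ℝ → X → ℝ) (hRmeas : ∀ n t, Measurable (R n t))
    (hR : ∀ n t x, 0 < R n t x ∧ R n t x ≤ 1)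
    (B : ℝ) (hB : ∀ (n k : ℕ) (t : ℝ), k ≤ K → t0 ≤ t →
      ∀ᵐ x ∂μ, R n t (T^[k] x) ≤ B * R (n + k) t x)
    (q : ℝ) (hq : 0 < q) :
    ∃ M : ℝ≥0∞, M ≠ ⊤ ∧ ∀ t, t0 ≤ t →
      (∑' n : ℕ, ENNReal.ofReal (Real.exp (-(n : ℝ) * q / t)) *
        ∫⁻ x, ENNReal.ofReal (R n t x) * G x ∂μ) /
      (∑' n : ℕ, ENNReal.ofReal (Real.exp (-(n : ℝ) * q / t)) *
        ∫⁻ x, ENNReal.ofReal (R n t x) * H t x ∂μ) ≤ M :=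
  stmt7_general hcons hatT hatTmeas hatTdual t0 ht0 K H G hHmeas C0 hC0 hsweep R hRmeas hR B hB q hq
end

section
/- Under the assumptions of the previous lemma with $G=1_Y$ where $0<\mu(Y)<\infty$, suppose additionally that $H_t,H\in L^\infty(\mu)$ are nonnegative, supported on $Y$, and $H_t\to H$ in $L^\infty(\mu)$ as $t\to\infty$. Then for any $q>0$, $\sum_{n\ge0}e^{-nq/t}\int_Y R_{n,t}H_t\,d\mu \sim \sum_{n\ge0}e^{-nq/t}\int_Y R_{n,t}H\,d\mu$ as $t\to\infty$. -/
/-!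
Write `A(G) = ∑ₙ e^{-nq/t} ∫_Y R_{n,t} G dμ`. If `‖H_t - H‖_∞ ≤ ε`, then
`|A(H_t) - A(H)| ≤ ε A(1_Y)`. Uniform sweeping, moved onto `R_{n,t}` by duality with `T̂` and the
ratio bound `R_{n,t} ∘ T^k ≤ B R_{n+k,t}`, gives `A(1_Y) ≤ C A(H_t)` with `C` independent of
`t ≥ t₀`: shifting `n` by `k ≤ K` changes the weight `e^{-nq/t}` by at most `e^{Kq/t₀}`.
Hence `A(1_Y) = O(A(H))`, so the error is `o(A(H))` and the ratio tends to `1`.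
-/

open MeasureTheory Filter Real Set
open scoped Topology ENNReal

namespace ENNReal

lemma div_mem_Icc_of_le_add_mul {f g η : ℝ≥0∞} (hg0 : g ≠ 0) (hg : g ≠ ∞)
    (hfg : f ≤ g + η * g) (hgf : g ≤ f + η * g) : f / g ∈ Icc (1 - η) (1 + η) := by
  refine ⟨?_, ?_⟩
  · rw [ENNReal.le_div_iff_mul_le (.inl hg0) (.inl hg), ENNReal.sub_mul fun _ _ => hg, one_mul]
    exact tsub_le_iff_right.mpr hgf
  · rw [ENNReal.div_le_iff hg0 hg, add_mul, one_mul]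
    exact hfg

lemma tendsto_div_nhds_one_of_le_add_mul {α : Type*} {l : Filter α} {f g : α → ℝ≥0∞}
    (hg0 : ∀ᶠ a in l, g a ≠ 0) (hg : ∀ᶠ a in l, g a ≠ ∞)
    (hfg : ∀ η, 0 < η → ∀ᶠ a in l, f a ≤ g a + η * g a ∧ g a ≤ f a + η * g a) :
    Tendsto (fun a => f a / g a) l (𝓝 1) := by
  rw [ENNReal.tendsto_nhds one_ne_top]
  intro η hη
  filter_upwards [hg0, hg, hfg η hη] with a hg0 hg hfg
  exact div_mem_Icc_of_le_add_mul hg0 hg hfg.1 hfg.2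

lemma le_two_mul_of_le_mul_of_le_add {s f g C ε : ℝ≥0∞} (hs : s ≠ ∞) (hsf : s ≤ C * f)
    (hfg : f ≤ g + ε * s) (hεC : C * ε = 2⁻¹) : s ≤ 2 * C * g := by
  have : s ≤ C * g + s / 2 := calc
    s ≤ C * (g + ε * s) := hsf.trans (by gcongr)
    _ = C * g + s / 2 := by rw [mul_add, ← mul_assoc, hεC, ENNReal.div_eq_inv_mul]
  have : s / 2 ≤ C * g := by
    rw [← ENNReal.sub_half hs]; exact tsub_le_iff_right.mpr this
  rw [mul_assoc]
  exact (ENNReal.div_le_iff (by norm_num) (by norm_num)).mp this |>.trans_eq (mul_comm _ _)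

lemma tendsto_div_nhds_one_of_le_mul {α : Type*} {l : Filter α} {f g s : α → ℝ≥0∞} {C : ℝ≥0∞}
    (hC : C ≠ ∞) (hsf : ∀ᶠ a in l, s a ≤ C * f a) (hs0 : ∀ᶠ a in l, s a ≠ 0)
    (hs : ∀ᶠ a in l, s a ≠ ∞) (hg : ∀ᶠ a in l, g a ≠ ∞)
    (hfg : ∀ ε, 0 < ε → ∀ᶠ a in l, f a ≤ g a + ε * s a ∧ g a ≤ f a + ε * s a) :
    Tendsto (fun a => f a / g a) l (𝓝 1) := by
  set D := 2 * (C + 1)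
  have hD0 : D ≠ 0 := by simp [D]
  have hD : D ≠ ∞ := ENNReal.mul_ne_top (by simp) (by simp [hC])
  have hsg : ∀ᶠ a in l, s a ≤ D * g a := by
    have hε : (C + 1) * ((C + 1)⁻¹ * 2⁻¹) = 2⁻¹ := by
      rw [← mul_assoc, ENNReal.mul_inv_cancel (by simp) (by simp [hC]), one_mul]
    filter_upwards [hs, hsf, hfg ((C + 1)⁻¹ * 2⁻¹) (ENNReal.mul_pos (by simp [hC]) (by simp))]
      with a hs hsf hfg
    exact le_two_mul_of_le_mul_of_le_add hs (hsf.trans (by gcongr; exact le_self_add)) hfg.1 hε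
  refine tendsto_div_nhds_one_of_le_add_mul ?_ hg fun η hη => ?_
  · filter_upwards [hs0, hsg] with a hs0 hsg h
    exact hs0 (by simpa [h] using hsg)
  · have hεD : η / D * D = η := ENNReal.div_mul_cancel hD0 hD
    filter_upwards [hsg, hfg (η / D) (ENNReal.div_pos hη.ne' hD)] with a hsg hfg
    have : η / D * s a ≤ η * g a := calc
      η / D * s a ≤ η / D * (D * g a) := by gcongr
      _ = η * g a := by rw [← mul_assoc, hεD]
    exact ⟨hfg.1.trans (by gcongr), hfg.2.trans (by gcongr)⟩

lemma tsum_mul_le_of_le_sum_shift {w a c : ℕ → ℝ≥0∞} {D E : ℝ≥0∞} {K : ℕ}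
    (hw : ∀ n k, k ≤ K → w n ≤ E * w (n + k))
    (hc : ∀ n, c n ≤ D * ∑ k ∈ Finset.range (K + 1), a (n + k)) :
    ∑' n, w n * c n ≤ D * E * (K + 1) * ∑' n, w n * a n := calc
  ∑' n, w n * c n ≤ ∑' n, ∑ k ∈ Finset.range (K + 1), D * E * (w (n + k) * a (n + k)) := by
    refine ENNReal.tsum_le_tsum fun n => (mul_le_mul_right (hc n) _).trans ?_
    rw [Finset.mul_sum, Finset.mul_sum]
    refine Finset.sum_le_sum fun k hk => ?_
    calc w n * (D * a (n + k)) ≤ E * w (n + k) * (D * a (n + k)) :=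
          mul_le_mul_left (hw n k (Nat.lt_succ_iff.mp (Finset.mem_range.mp hk))) _
      _ = D * E * (w (n + k) * a (n + k)) := by ring
  _ = ∑ k ∈ Finset.range (K + 1), D * E * ∑' n, w (n + k) * a (n + k) := by
    rw [Summable.tsum_finsetSum fun _ _ => ENNReal.summable]
    simp only [ENNReal.tsum_mul_left]
  _ ≤ ∑ k ∈ Finset.range (K + 1), D * E * ∑' n, w n * a n := by
    refine Finset.sum_le_sum fun k _ => ?_
    gcongr D * E * ?_
    exact ENNReal.tsum_comp_le_tsum_of_injective (add_left_injective k) (fun n => w n * a n)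
  _ = D * E * (K + 1) * ∑' n, w n * a n := by
    rw [Finset.sum_const, Finset.card_range, nsmul_eq_mul]
    push_cast
    ring

end ENNReal

noncomputable def expWeightedSum (q t : ℝ) (a : ℕ → ℝ≥0∞) : ℝ≥0∞ :=
  ∑' n : ℕ, ENNReal.ofReal (Real.exp (-(n : ℝ) * q / t)) * a n

namespace expWeightedSum

variable {q t : ℝ} {a b c : ℕ → ℝ≥0∞}

lemma le_add_mul {ε : ℝ≥0∞} (h : ∀ n, a n ≤ b n + ε * c n) :
    expWeightedSum q t a ≤ expWeightedSum q t b + ε * expWeightedSum q t c := calc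
  expWeightedSum q t a ≤ ∑' n : ℕ, (ENNReal.ofReal (Real.exp (-(n : ℝ) * q / t)) * b n
      + ε * (ENNReal.ofReal (Real.exp (-(n : ℝ) * q / t)) * c n)) :=
    ENNReal.tsum_le_tsum fun n => by rw [mul_left_comm ε, ← mul_add]; gcongr; exact h n
  _ = _ := by rw [ENNReal.tsum_add, ENNReal.tsum_mul_left]; rfl

lemma tsum_weight_ne_top (hq : 0 < q) (ht : 0 < t) :
    ∑' n : ℕ, ENNReal.ofReal (Real.exp (-(n : ℝ) * q / t)) ≠ ∞ := by
  have hgeom : ∀ n : ℕ, ENNReal.ofReal (Real.exp (-(n : ℝ) * q / t))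
      = ENNReal.ofReal (Real.exp (-(q / t))) ^ n := fun n => by
    rw [← ENNReal.ofReal_pow (Real.exp_nonneg _), ← Real.exp_nat_mul]
    ring_nf
  rw [tsum_congr hgeom, ENNReal.tsum_geometric, Ne, ENNReal.inv_eq_top, tsub_eq_zero_iff_le,
    not_le, ENNReal.ofReal_lt_one, Real.exp_lt_one_iff, neg_neg_iff_pos]
  positivity

lemma ne_top (hq : 0 < q) (ht : 0 < t) {M : ℝ≥0∞} (hM : M ≠ ∞) (ha : ∀ n, a n ≤ M) :
    expWeightedSum q t a ≠ ∞ := by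
  refine ne_top_of_le_ne_top (ENNReal.mul_ne_top (tsum_weight_ne_top hq ht) hM) ?_
  rw [← ENNReal.tsum_mul_right]
  exact ENNReal.tsum_le_tsum fun n => by gcongr; exact ha n

lemma ne_zero (h : a 0 ≠ 0) : expWeightedSum q t a ≠ 0 := by
  refine (pos_iff_ne_zero.mpr ?_).trans_le (ENNReal.le_tsum 0) |>.ne'
  simpa using h

lemma weight_le_mul_weight_add {t₀ : ℝ} {n k K : ℕ} (hq : 0 ≤ q) (ht₀ : 0 < t₀) (ht : t₀ ≤ t)
    (hk : k ≤ K) :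
    ENNReal.ofReal (Real.exp (-(n : ℝ) * q / t)) ≤
      ENNReal.ofReal (Real.exp (K * q / t₀)) *
        ENNReal.ofReal (Real.exp (-((n + k : ℕ) : ℝ) * q / t)) := by
  rw [← ENNReal.ofReal_mul (Real.exp_nonneg _), ← Real.exp_add]
  refine ENNReal.ofReal_le_ofReal (Real.exp_le_exp.mpr ?_)
  have : (k : ℝ) * q / t ≤ K * q / t₀ := by gcongr
  have ht' : 0 < t := ht₀.trans_le ht
  have : -(n : ℝ) * q / t = k * q / t + -((n + k : ℕ) : ℝ) * q / t := by
    push_cast; field_simp; ring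
  linarith

lemma le_mul_of_le_sum_shift {t₀ : ℝ} {K : ℕ} {D : ℝ≥0∞} (hq : 0 ≤ q) (ht₀ : 0 < t₀)
    (ht : t₀ ≤ t) (hc : ∀ n, c n ≤ D * ∑ k ∈ Finset.range (K + 1), a (n + k)) :
    expWeightedSum q t c ≤
      D * ENNReal.ofReal (Real.exp (K * q / t₀)) * (K + 1) * expWeightedSum q t a :=
  ENNReal.tsum_mul_le_of_le_sum_shift (fun _ _ hk => weight_le_mul_weight_add hq ht₀ ht hk) hc

end expWeightedSum

section

variable {X : Type*} [MeasurableSpace X] {μ : Measure X}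

lemma lintegral_mul_le_add_mul {r G G' : X → ℝ≥0∞} {ε : ℝ≥0∞} (hr : Measurable r)
    (h : ∀ᵐ x ∂μ, G x ≤ G' x + ε) :
    ∫⁻ x, r x * G x ∂μ ≤ ∫⁻ x, r x * G' x ∂μ + ε * ∫⁻ x, r x ∂μ := calc
  ∫⁻ x, r x * G x ∂μ ≤ ∫⁻ x, (r x * G' x + ε * r x) ∂μ :=
    lintegral_mono_ae <| h.mono fun x hx => by rw [mul_comm ε, ← mul_add]; gcongr
  _ = _ := by rw [lintegral_add_right _ (hr.const_mul ε), lintegral_const_mul ε hr]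

lemma lintegral_mul_le_mul_measure_univ {r G : X → ℝ≥0∞} {M : ℝ≥0∞} (hr : ∀ x, r x ≤ 1)
    (hG : ∀ᵐ x ∂μ, G x ≤ M) : ∫⁻ x, r x * G x ∂μ ≤ M * μ univ := calc
  ∫⁻ x, r x * G x ∂μ ≤ ∫⁻ _, M ∂μ :=
    lintegral_mono_ae <| hG.mono fun x hx => (mul_le_mul' (hr x) hx).trans_eq (one_mul M)
  _ = M * μ univ := lintegral_const M

lemma setLIntegral_le_of_indicator_le_sum {Y : Set X} (hY : MeasurableSet Y) {v : X → ℝ≥0∞}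
    {g : ℕ → X → ℝ≥0∞} {C : ℝ≥0∞} {s : Finset ℕ} (hv : Measurable v)
    (hg : ∀ k, Measurable (g k))
    (h : ∀ᵐ x ∂μ, Y.indicator (fun _ => (1 : ℝ≥0∞)) x ≤ C * ∑ k ∈ s, g k x) :
    ∫⁻ x in Y, v x ∂μ ≤ C * ∑ k ∈ s, ∫⁻ x, v x * g k x ∂μ := calc
  ∫⁻ x in Y, v x ∂μ = ∫⁻ x, Y.indicator (fun _ => (1 : ℝ≥0∞)) x * v x ∂μ := by
    rw [← lintegral_indicator hY]
    congr 1 with x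
    by_cases hx : x ∈ Y <;> simp [hx]
  _ ≤ ∫⁻ x, C * ∑ k ∈ s, v x * g k x ∂μ := by
    refine lintegral_mono_ae <| h.mono fun x hx => ?_
    calc _ ≤ C * (∑ k ∈ s, g k x) * v x := by gcongr
      _ = _ := by
        rw [Finset.mul_sum, Finset.mul_sum, Finset.sum_mul]
        simp only [mul_assoc, mul_comm (v x)]
  _ = C * ∑ k ∈ s, ∫⁻ x, v x * g k x ∂μ := by
    rw [lintegral_const_mul C (f := fun x => ∑ k ∈ s, v x * g k x)
      (Finset.measurable_fun_sum _ fun k _ => hv.mul (hg k))]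
    congr 1
    exact lintegral_finsetSum _ fun k _ => hv.mul (hg k)

structure IsTransferOperator_s8 (μ : Measure X) (T : X → X) (hatT : (X → ℝ≥0∞) → X → ℝ≥0∞) :
    Prop where
  measurable_apply : ∀ u, Measurable u → Measurable (hatT u)
  lintegral_comp_mul : ∀ u v : X → ℝ≥0∞, Measurable u → Measurable v →
    ∫⁻ x, v (T x) * u x ∂μ = ∫⁻ x, v x * hatT u x ∂μ

namespace IsTransferOperator_s8

variable {T : X → X} {hatT : (X → ℝ≥0∞) → X → ℝ≥0∞}

lemma measurable_iterate (h : IsTransferOperator_s8 μ T hatT) {u : X → ℝ≥0∞} (hu : Measurable u)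
    (k : ℕ) : Measurable (hatT^[k] u) :=
  Function.Iterate.rec Measurable hu h.measurable_apply k

lemma lintegral_comp_iterate_mul (h : IsTransferOperator_s8 μ T hatT) (hT : Measurable T) (k : ℕ)
    {u v : X → ℝ≥0∞} (hu : Measurable u) (hv : Measurable v) :
    ∫⁻ x, v (T^[k] x) * u x ∂μ = ∫⁻ x, v x * hatT^[k] u x ∂μ := by
  induction k generalizing u with
  | zero => rfl
  | succ k ih =>
    exact (h.lintegral_comp_mul u (v ∘ T^[k]) hu (hv.comp (hT.iterate k))).trans
      (ih (h.measurable_apply u hu))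

lemma lintegral_mul_iterate_le (h : IsTransferOperator_s8 μ T hatT) (hT : Measurable T) {k : ℕ}
    {u v w : X → ℝ≥0∞} {c : ℝ≥0∞} (hu : Measurable u) (hv : Measurable v) (hc : c ≠ ∞)
    (hvw : ∀ᵐ x ∂μ, v (T^[k] x) ≤ c * w x) :
    ∫⁻ x, v x * hatT^[k] u x ∂μ ≤ c * ∫⁻ x, w x * u x ∂μ := by
  rw [← h.lintegral_comp_iterate_mul hT k hu hv, ← lintegral_const_mul' c _ hc]
  exact lintegral_mono_ae <| hvw.mono fun x hx =>
    (mul_le_mul_left hx (u x)).trans_eq (mul_assoc _ _ _)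

lemma setLIntegral_ofReal_le_sum_shift (h : IsTransferOperator_s8 μ T hatT) (hT : Measurable T)
    {Y : Set X} (hY : MeasurableSet Y) {K : ℕ} {C : ℝ≥0∞} {u : X → ℝ≥0∞} (hu : Measurable u)
    (hu_supp : ∀ x, x ∉ Y → u x = 0)
    (hsweep : ∀ᵐ x ∂μ,
      Y.indicator (fun _ => (1 : ℝ≥0∞)) x ≤ C * ∑ k ∈ Finset.range (K + 1), hatT^[k] u x)
    {r : ℕ → X → ℝ} (hr : ∀ n, Measurable (r n)) (hr_nonneg : ∀ n x, 0 ≤ r n x) {B : ℝ}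
    (hB : ∀ n k, k ≤ K → ∀ᵐ x ∂μ, r n (T^[k] x) ≤ B * r (n + k) x) (n : ℕ) :
    ∫⁻ x in Y, ENNReal.ofReal (r n x) ∂μ ≤
      C * ENNReal.ofReal B *
        ∑ k ∈ Finset.range (K + 1), ∫⁻ x in Y, ENNReal.ofReal (r (n + k) x) * u x ∂μ := calc
  _ ≤ C * ∑ k ∈ Finset.range (K + 1), ∫⁻ x, ENNReal.ofReal (r n x) * hatT^[k] u x ∂μ :=
    setLIntegral_le_of_indicator_le_sum hY (hr n).ennreal_ofReal (h.measurable_iterate hu) hsweep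
  _ ≤ C * ∑ k ∈ Finset.range (K + 1),
        ENNReal.ofReal B * ∫⁻ x, ENNReal.ofReal (r (n + k) x) * u x ∂μ := by
    gcongr with k hk
    refine h.lintegral_mul_iterate_le hT hu (hr n).ennreal_ofReal ENNReal.ofReal_ne_top ?_
    filter_upwards [hB n k (Nat.lt_succ_iff.mp (Finset.mem_range.mp hk))] with x hx
    rw [← ENNReal.ofReal_mul' (hr_nonneg _ x)]
    exact ENNReal.ofReal_le_ofReal hx
  _ = _ := by
    rw [mul_assoc, Finset.mul_sum (Finset.range (K + 1)) _ (ENNReal.ofReal B)]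
    refine congrArg (C * ·) (Finset.sum_congr rfl fun k _ => ?_)
    rw [setLIntegral_eq_of_support_subset ((Function.support_mul_subset_right _ _).trans
      (Function.support_subset_iff'.mpr hu_supp))]

end IsTransferOperator_s8

lemma setLIntegral_ofReal_ne_zero {Y : Set X} {r : X → ℝ} (hr : Measurable r) (hr0 : ∀ x, 0 < r x)
    (hY : μ Y ≠ 0) : ∫⁻ x in Y, ENNReal.ofReal (r x) ∂μ ≠ 0 := by
  refine ((setLIntegral_pos_iff hr.ennreal_ofReal).mpr ?_).ne'
  have : Function.support (fun x => ENNReal.ofReal (r x)) = univ :=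
    eq_univ_of_forall fun x => (ENNReal.ofReal_pos.mpr (hr0 x)).ne'
  rwa [this, univ_inter, pos_iff_ne_zero]

end

theorem stmt8_general {X : Type*} [MeasurableSpace X] {μ : Measure X}
    {T : X → X} (hcons : Conservative T μ)
    {Y : Set X} (hYm : MeasurableSet Y) (hY0 : 0 < μ Y) (hY1 : μ Y < ⊤)
    (hatT : (X → ℝ≥0∞) → (X → ℝ≥0∞))
    (hatTmeas : ∀ u, Measurable u → Measurable (hatT u))
    (hatTdual : ∀ u v : X → ℝ≥0∞, Measurable u → Measurable v →
      ∫⁻ x, v (T x) * u x ∂μ = ∫⁻ x, v x * hatT u x ∂μ)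
    (t0 : ℝ) (ht0 : 0 < t0) (K : ℕ)
    (H : ℝ → X → ℝ≥0∞) (Hlim : X → ℝ≥0∞)
    (hHmeas : ∀ t, Measurable (H t))
    -- `H_t`, `H` are nonnegative, essentially bounded and supported on `Y`
    (hHlimbd : ∃ M : ℝ≥0∞, M ≠ ⊤ ∧ ∀ᵐ x ∂μ, Hlim x ≤ M)
    (hHsupp : ∀ t x, x ∉ Y → H t x = 0)
    -- uniform sweeping of `{H_t}_{t ≥ t0}` for `1_Y`
    (C0 : ℝ≥0∞) (hC0 : C0 ≠ ⊤)
    (hsweep : ∀ t, t0 ≤ t → ∀ᵐ x ∂μ,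
      Y.indicator (fun _ => (1:ℝ≥0∞)) x ≤ C0 * ∑ k ∈ Finset.range (K + 1), (hatT^[k] (H t)) x)
    -- `H_t → H` in `L^∞(μ)` as `t → ∞`
    (hHconv : ∀ ε : ℝ≥0∞, 0 < ε → ∀ᶠ t in atTop,
      ∀ᵐ x ∂μ, H t x ≤ Hlim x + ε ∧ Hlim x ≤ H t x + ε)
    (R : ℕ → ℝ → X → ℝ) (hRmeas : ∀ n t, Measurable (R n t))
    (hR : ∀ n t x, 0 < R n t x ∧ R n t x ≤ 1)
    (B : ℝ) (hB : ∀ (n k : ℕ) (t : ℝ), k ≤ K → t0 ≤ t →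
      ∀ᵐ x ∂μ, R n t (T^[k] x) ≤ B * R (n + k) t x)
    (q : ℝ) (hq : 0 < q) :
    Tendsto (fun t =>
      (∑' n : ℕ, ENNReal.ofReal (Real.exp (-(n : ℝ) * q / t)) *
        ∫⁻ x in Y, ENNReal.ofReal (R n t x) * H t x ∂μ) /
      (∑' n : ℕ, ENNReal.ofReal (Real.exp (-(n : ℝ) * q / t)) *
        ∫⁻ x in Y, ENNReal.ofReal (R n t x) * Hlim x ∂μ))
      atTop (𝓝 1) := by
  have htr : IsTransferOperator_s8 μ T hatT := ⟨hatTmeas, hatTdual⟩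
  have hRm n t : Measurable fun x => ENNReal.ofReal (R n t x) := (hRmeas n t).ennreal_ofReal
  have hR1 n t x : ENNReal.ofReal (R n t x) ≤ 1 := ENNReal.ofReal_le_one.mpr (hR n t x).2
  obtain ⟨M, hM, hHlimM⟩ := hHlimbd
  refine ENNReal.tendsto_div_nhds_one_of_le_mul
    (s := fun t => expWeightedSum q t fun n => ∫⁻ x in Y, ENNReal.ofReal (R n t x) ∂μ)
    (C := C0 * ENNReal.ofReal B * ENNReal.ofReal (exp (K * q / t0)) * (K + 1))
    (by finiteness) ?_ (.of_forall fun t => ?_) ?_ ?_ fun ε hε => ?_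
  · filter_upwards [eventually_ge_atTop t0] with t ht
    exact expWeightedSum.le_mul_of_le_sum_shift hq.le ht0 ht <|
      htr.setLIntegral_ofReal_le_sum_shift hcons.measurable hYm (hHmeas t) (hHsupp t) (hsweep t ht)
        (hRmeas · t) (fun n x => (hR n t x).1.le) fun n k hk => hB n k t hk ht
  · exact expWeightedSum.ne_zero (setLIntegral_ofReal_ne_zero (hRmeas 0 t) (hR 0 t · |>.1) hY0.ne')
  · filter_upwards [eventually_gt_atTop 0] with t ht
    exact expWeightedSum.ne_top hq ht hY1.ne fun n =>
      (setLIntegral_mono measurable_const fun x _ => hR1 n t x).trans_eq (setLIntegral_one Y)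
  · filter_upwards [eventually_gt_atTop 0] with t ht
    refine expWeightedSum.ne_top hq ht (ENNReal.mul_ne_top hM hY1.ne) fun n => ?_
    simpa using lintegral_mul_le_mul_measure_univ (hR1 n t) (ae_restrict_of_ae hHlimM)
  · filter_upwards [hHconv ε hε] with t ht
    exact ⟨expWeightedSum.le_add_mul fun n =>
        lintegral_mul_le_add_mul (hRm n t) (ae_restrict_of_ae (ht.mono fun _ hx => hx.1)),
      expWeightedSum.le_add_mul fun n =>
        lintegral_mul_le_add_mul (hRm n t) (ae_restrict_of_ae (ht.mono fun _ hx => hx.2))⟩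

/-- Integrating transforms: under uniform sweeping for `1_Y` and `H_t → H` in `L^∞`,
the double transforms against `H_t` and against `H` are asymptotically equivalent. -/
theorem stmt8 {X : Type*} [MeasurableSpace X] {μ : Measure X} [SigmaFinite μ]
    {T : X → X} (hcons : Conservative T μ) (herg : Ergodic T μ)
    {Y : Set X} (hYm : MeasurableSet Y) (hY0 : 0 < μ Y) (hY1 : μ Y < ⊤)
    (hatT : (X → ℝ≥0∞) → (X → ℝ≥0∞))
    (hatTmeas : ∀ u, Measurable u → Measurable (hatT u))
    (hatTdual : ∀ u v : X → ℝ≥0∞, Measurable u → Measurable v →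
      ∫⁻ x, v (T x) * u x ∂μ = ∫⁻ x, v x * hatT u x ∂μ)
    (t0 : ℝ) (ht0 : 0 < t0) (K : ℕ)
    (H : ℝ → X → ℝ≥0∞) (Hlim : X → ℝ≥0∞)
    (hHmeas : ∀ t, Measurable (H t)) (hHlimmeas : Measurable Hlim)
    -- `H_t`, `H` are nonnegative, essentially bounded and supported on `Y`
    (hHbd : ∀ t, ∃ M : ℝ≥0∞, M ≠ ⊤ ∧ ∀ᵐ x ∂μ, H t x ≤ M)
    (hHlimbd : ∃ M : ℝ≥0∞, M ≠ ⊤ ∧ ∀ᵐ x ∂μ, Hlim x ≤ M)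
    (hHsupp : ∀ t x, x ∉ Y → H t x = 0) (hHlimsupp : ∀ x, x ∉ Y → Hlim x = 0)
    -- uniform sweeping of `{H_t}_{t ≥ t0}` for `1_Y`
    (C0 : ℝ≥0∞) (hC0 : C0 ≠ ⊤)
    (hsweep : ∀ t, t0 ≤ t → ∀ᵐ x ∂μ,
      Y.indicator (fun _ => (1:ℝ≥0∞)) x ≤ C0 * ∑ k ∈ Finset.range (K + 1), (hatT^[k] (H t)) x)
    -- `H_t → H` in `L^∞(μ)` as `t → ∞`
    (hHconv : ∀ ε : ℝ≥0∞, 0 < ε → ∀ᶠ t in atTop,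
      ∀ᵐ x ∂μ, H t x ≤ Hlim x + ε ∧ Hlim x ≤ H t x + ε)
    (R : ℕ → ℝ → X → ℝ) (hRmeas : ∀ n t, Measurable (R n t))
    (hR : ∀ n t x, 0 < R n t x ∧ R n t x ≤ 1)
    (B : ℝ) (hB : ∀ (n k : ℕ) (t : ℝ), k ≤ K → t0 ≤ t →
      ∀ᵐ x ∂μ, R n t (T^[k] x) ≤ B * R (n + k) t x)
    (q : ℝ) (hq : 0 < q) :
    Tendsto (fun t =>
      (∑' n : ℕ, ENNReal.ofReal (Real.exp (-(n : ℝ) * q / t)) *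
        ∫⁻ x in Y, ENNReal.ofReal (R n t x) * H t x ∂μ) /
      (∑' n : ℕ, ENNReal.ofReal (Real.exp (-(n : ℝ) * q / t)) *
        ∫⁻ x in Y, ENNReal.ofReal (R n t x) * Hlim x ∂μ))
      atTop (𝓝 1) :=
  stmt8_general hcons hYm hY0 hY1 hatT hatTmeas hatTdual t0 ht0 K H Hlim hHmeas hHlimbd hHsupp C0
    hC0 hsweep hHconv R hRmeas hR B hB q hq
end

section
/- Let $T$ be a CEMPT on an infinite $\sigma$-finite measure space with reference set $Y$ of finite positive measure. Let $\alpha\in(0,1)$ and $\{c(n)\}_{n\ge0}$ be a non-increasing $(0,1]$-valued sequence with $c(0)=1$ and $c(n)\to0$. Then there exists a $\mu$-probability density function $G$ such that $\limsup_{n\to\infty} c(n)^{-\alpha}\,\mu_G(Z_n^Y/n\le c(n))=\infty$, where $\mu_G(A)=\int_A G\,d\mu$ and $Z_n^Y(x)=\max\{k\le n:T^kx\in Y\}$ (with $\max\emptyset=0$). -/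
open MeasureTheory Filter Real Set
open scoped Topology ENNReal

/-!
With `φ` the first return time to `Y`, `noReturnSet T Y n` is `Y ∩ {φ > n}`, and `Z_n^Y = 0` on it.
Since `T` preserves `μ`, the set of points whose first visit to `Y` happens at time `m` has the
same measure as `Y ∩ {φ > m}` (Kac's tower); by conservativity and ergodicity these sets cover `X`
up to a null set. As `μ X = ∞` while `μ Y < ∞`, every `Y ∩ {φ > n}` therefore has positive measure.
Choosing times `n_k` with `c(n_k)^α ≤ 2^{-(k+1)} / k` and spreading mass `2^{-(k+1)}` uniformly
over `Y ∩ {φ > n_k}` gives `c(n_k)^{-α} μ_G(Z_{n_k}^Y = 0) ≥ k`.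
-/

namespace Dynamics

open Function

variable {X : Type*} {T : X → X} {Y : Set X}

def noReturnSet (T : X → X) (Y : Set X) (n : ℕ) : Set X :=
  {x | x ∈ Y ∧ ∀ k ∈ Icc 1 n, T^[k] x ∉ Y}

def firstHitSet (T : X → X) (Y : Set X) (m : ℕ) : Set X :=
  {x | T^[m] x ∈ Y ∧ ∀ j < m, T^[j] x ∉ Y}

theorem noReturnSet_antitone : Antitone (noReturnSet T Y) :=
  fun _ _ hmn _ hx => ⟨hx.1, fun k hk => hx.2 k ⟨hk.1, hk.2.trans hmn⟩⟩

theorem noReturnSet_subset (n : ℕ) : noReturnSet T Y n ⊆ Y :=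
  fun _ hx => hx.1

theorem noReturnSet_zero : noReturnSet T Y 0 = Y := by
  simp [noReturnSet]

theorem lastVisit_eq_zero_of_mem_noReturnSet {n : ℕ} {x : X} (hx : x ∈ noReturnSet T Y n) :
    lastVisit T Y n x = 0 := by
  have hvisits : {k | k ≤ n ∧ T^[k] x ∈ Y} = {0} := by
    ext k
    simp only [mem_ofPred_eq, mem_singleton_iff]
    refine ⟨fun ⟨hkn, hk⟩ => ?_, fun hk => ⟨by omega, by simpa [hk] using hx.1⟩⟩
    by_contra hk0
    exact hx.2 k ⟨by omega, hkn⟩ hk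
  rw [lastVisit, hvisits, csSup_singleton]

theorem firstHitSet_zero : firstHitSet T Y 0 = Y := by
  simp [firstHitSet]

theorem firstHitSet_succ (m : ℕ) : firstHitSet T Y (m + 1) = T ⁻¹' firstHitSet T Y m \ Y := by
  ext x
  simp only [firstHitSet, Set.mem_sdiff, mem_preimage, mem_ofPred_eq, ← iterate_succ_apply]
  constructor
  · rintro ⟨hm, hlt⟩
    exact ⟨⟨hm, fun j hj => hlt (j + 1) (by omega)⟩, hlt 0 (by omega)⟩
  · rintro ⟨⟨hm, hlt⟩, hx⟩
    refine ⟨hm, fun j hj => ?_⟩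
    rcases j with _ | j
    exacts [hx, hlt j (by omega)]

theorem inter_preimage_firstHitSet (m : ℕ) :
    Y ∩ T ⁻¹' firstHitSet T Y m = noReturnSet T Y m \ noReturnSet T Y (m + 1) := by
  ext x
  simp only [firstHitSet, noReturnSet, Set.mem_sdiff, mem_inter_iff, mem_preimage, mem_ofPred_eq,
    mem_Icc, ← iterate_succ_apply]
  constructor
  · rintro ⟨hx, hm, hlt⟩
    refine ⟨⟨hx, fun k hk => ?_⟩, fun h => h.2 (m + 1) ⟨by omega, le_rfl⟩ hm⟩
    obtain ⟨j, rfl⟩ : ∃ j, k = j + 1 := ⟨k - 1, by omega⟩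
    exact hlt j (by omega)
  · rintro ⟨⟨hx, hle⟩, hnot⟩
    refine ⟨hx, ?_, fun j hj => hle (j + 1) ⟨by omega, by omega⟩⟩
    by_contra hm
    refine hnot ⟨hx, fun k hk => ?_⟩
    rcases hk.2.lt_or_eq with hk' | rfl
    exacts [hle k ⟨hk.1, by omega⟩, hm]

theorem iUnion_firstHitSet : ⋃ m, firstHitSet T Y m = {x | ∃ n, T^[n] x ∈ Y} := by
  classical
  ext x
  simp only [mem_iUnion, mem_ofPred_eq]
  refine ⟨fun ⟨m, hm⟩ => ⟨m, hm.1⟩, fun h => ⟨Nat.find h, Nat.find_spec h, fun j => Nat.find_min h⟩⟩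

variable [MeasurableSpace X] {μ : Measure X}

theorem measurableSet_noReturnSet (hT : Measurable T) (hY : MeasurableSet Y) (n : ℕ) :
    MeasurableSet (noReturnSet T Y n) := by
  unfold noReturnSet
  measurability

theorem measurableSet_firstHitSet (hT : Measurable T) (hY : MeasurableSet Y) (m : ℕ) :
    MeasurableSet (firstHitSet T Y m) := by
  unfold firstHitSet
  measurability

theorem _root_.MeasureTheory.MeasurePreserving.measure_firstHitSet
    (hT : MeasurePreserving T μ μ) (hY : MeasurableSet Y) (hYfin : μ Y ≠ ∞) (m : ℕ) :
    μ (firstHitSet T Y m) = μ (noReturnSet T Y m) := by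
  induction m with
  | zero => rw [firstHitSet_zero, noReturnSet_zero]
  | succ m ih =>
    have hfirst : μ (firstHitSet T Y m) = μ (noReturnSet T Y m \ noReturnSet T Y (m + 1)) +
        μ (firstHitSet T Y (m + 1)) := by
      rw [← hT.measure_preimage (measurableSet_firstHitSet hT.measurable hY m).nullMeasurableSet,
        ← inter_preimage_firstHitSet, firstHitSet_succ, inter_comm,
        measure_inter_add_sdiff _ hY]
    have hnoReturn : μ (noReturnSet T Y m) =
        μ (noReturnSet T Y m \ noReturnSet T Y (m + 1)) + μ (noReturnSet T Y (m + 1)) := by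
      rw [← measure_sdiff_add_inter _ (measurableSet_noReturnSet hT.measurable hY (m + 1)),
        inter_eq_right.2 (noReturnSet_antitone m.le_succ)]
    have hR : μ (noReturnSet T Y m \ noReturnSet T Y (m + 1)) ≠ ∞ :=
      ne_top_of_le_ne_top hYfin (measure_mono fun _ hx => noReturnSet_subset m hx.1)
    rwa [hfirst, hnoReturn, ENNReal.add_right_inj hR] at ih

theorem _root_.MeasureTheory.MeasurePreserving.measure_univ_le_tsum_noReturnSet
    (hT : MeasurePreserving T μ μ) (hY : MeasurableSet Y) (hYfin : μ Y ≠ ∞)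
    (hhit : ∀ᵐ x ∂μ, ∃ n, T^[n] x ∈ Y) :
    μ univ ≤ ∑' m, μ (noReturnSet T Y m) := calc
  μ univ = μ (⋃ m, firstHitSet T Y m) := by
    rw [iUnion_firstHitSet]
    exact (measure_congr (ae_eq_univ.2 (ae_iff.1 hhit))).symm
  _ ≤ ∑' m, μ (firstHitSet T Y m) := measure_iUnion_le _
  _ = ∑' m, μ (noReturnSet T Y m) := by simp_rw [hT.measure_firstHitSet hY hYfin]

theorem _root_.MeasureTheory.MeasurePreserving.measure_noReturnSet_pos
    (hT : MeasurePreserving T μ μ) (hY : MeasurableSet Y) (hYfin : μ Y ≠ ∞) (hinf : μ univ = ∞)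
    (hhit : ∀ᵐ x ∂μ, ∃ n, T^[n] x ∈ Y) (n : ℕ) :
    0 < μ (noReturnSet T Y n) := by
  by_contra! hzero
  have htail : ∀ m ∉ Finset.range n, μ (noReturnSet T Y m) = 0 := fun m hm =>
    measure_mono_null (noReturnSet_antitone (by simpa using hm)) (nonpos_iff_eq_zero.1 hzero)
  have hfin : ∑' m, μ (noReturnSet T Y m) < ∞ := by
    rw [tsum_eq_sum htail]
    exact ENNReal.sum_lt_top.2 fun m _ =>
      (measure_mono (noReturnSet_subset m)).trans_lt hYfin.lt_top
  exact (hT.measure_univ_le_tsum_noReturnSet hY hYfin hhit).trans_lt hfin |>.ne hinf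

theorem _root_.MeasureTheory.Ergodic.ae_frequently_iterate_mem (herg : Ergodic T μ)
    (hcons : Conservative T μ) (hY : MeasurableSet Y) (hY0 : μ Y ≠ 0) :
    ∀ᵐ x ∂μ, ∃ᶠ n in atTop, T^[n] x ∈ Y := by
  set s := {x | ∃ᶠ n in atTop, T^[n] x ∈ Y}
  have hs : MeasurableSet s := by
    simp only [s, frequently_atTop, ofPred_forall, ofPred_exists, ofPred_and]
    exact .iInter fun a => .iUnion fun b =>
      (MeasurableSet.const _).inter (herg.measurable.iterate b hY)
  have hinv : T ⁻¹' s = s := by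
    ext x
    change (∃ᶠ n in atTop, T^[n] (T x) ∈ Y) ↔ ∃ᶠ n in atTop, T^[n] x ∈ Y
    conv_rhs => rw [← map_add_atTop_eq_nat 1, frequently_map]
    simp only [iterate_succ_apply]
  refine (herg.ae_mem_or_ae_notMem hs hinv).resolve_right fun hnot => hY0 ?_
  refine measure_eq_zero_iff_ae_notMem.2 ?_
  filter_upwards [hnot, hcons.ae_mem_imp_frequently_image_mem hY.nullMeasurableSet] with x hx hrec
  exact fun hxY => hx (hrec hxY)

end Dynamics

open Dynamics

theorem ENNReal.limsup_eq_top_of_natCast_le_comp {u : ℕ → ℝ≥0∞} {n : ℕ → ℕ}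
    (hn : Tendsto n atTop atTop) (h : ∀ k : ℕ, (k : ℝ≥0∞) ≤ u (n k)) : limsup u atTop = ∞ := by
  refine ENNReal.eq_top_of_forall_nnreal_le fun r => le_limsup_of_frequently_le ?_
  obtain ⟨k₀, hk₀⟩ := exists_nat_ge r
  refine hn.frequently ((eventually_ge_atTop k₀).frequently.mono fun k hk => le_trans ?_ (h k))
  exact_mod_cast hk₀.trans (Nat.cast_le.2 hk)

theorem ENNReal.exists_tendsto_atTop_natCast_le_inv_mul {a ε : ℕ → ℝ≥0∞}
    (ha : Tendsto a atTop (𝓝 0)) (hε0 : ∀ k, ε k ≠ 0) (hεtop : ∀ k, ε k ≠ ∞) :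
    ∃ n : ℕ → ℕ, Tendsto n atTop atTop ∧ ∀ k : ℕ, (k : ℝ≥0∞) ≤ (a (n k))⁻¹ * ε k := by
  have hsmall : ∀ k, ∃ m, k ≤ m ∧ a m ≤ ε k / k := fun k =>
    ((eventually_ge_atTop k).and
      (ha.eventually_le_const (ENNReal.div_pos (hε0 k) (ENNReal.natCast_ne_top k)))).exists
  choose n hkn han using hsmall
  refine ⟨n, tendsto_atTop_mono hkn tendsto_id, fun k => ?_⟩
  calc (k : ℝ≥0∞) = (ε k / k)⁻¹ * ε k := by
        rw [ENNReal.inv_div (Or.inl (ENNReal.natCast_ne_top k)) (Or.inr (hε0 k)),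
          ENNReal.div_mul_cancel (hε0 k) (hεtop k)]
    _ ≤ (a (n k))⁻¹ * ε k := by gcongr; exact han k

theorem MeasureTheory.exists_density_le_setLIntegral {X : Type*} [MeasurableSpace X]
    {μ : Measure X} {B : ℕ → Set X} (hB : ∀ k, MeasurableSet (B k)) (hB0 : ∀ k, μ (B k) ≠ 0)
    (hBtop : ∀ k, μ (B k) ≠ ∞) {p : ℕ → ℝ≥0∞} (hp : ∑' k, p k = 1) :
    ∃ G : X → ℝ≥0∞, Measurable G ∧ ∫⁻ x, G x ∂μ = 1 ∧ ∀ k, p k ≤ ∫⁻ x in B k, G x ∂μ := by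
  have hpiece : ∀ k, Measurable ((B k).indicator fun _ => p k / μ (B k)) := fun k =>
    measurable_const.indicator (hB k)
  refine ⟨fun x => ∑' k, (B k).indicator (fun _ => p k / μ (B k)) x,
    Measurable.tsum hpiece, ?_, fun k => ?_⟩
  · rw [lintegral_tsum fun k => (hpiece k).aemeasurable]
    simp_rw [lintegral_indicator_const (hB _), ENNReal.div_mul_cancel (hB0 _) (hBtop _), hp]
  · calc p k = ∫⁻ _ in B k, p k / μ (B k) ∂μ := by
          rw [setLIntegral_const, ENNReal.div_mul_cancel (hB0 k) (hBtop k)]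
      _ ≤ _ := setLIntegral_mono' (hB k) fun x hx =>
          (ENNReal.le_tsum k).trans_eq' (indicator_of_mem hx _)

theorem stmt11_general {X : Type*} [MeasurableSpace X] {μ : Measure X}
    {T : X → X} (hcons : Conservative T μ) (herg : Ergodic T μ)
    (hinf : μ Set.univ = ⊤) {Y : Set X} (hYm : MeasurableSet Y)
    (hY0 : 0 < μ Y) (hY1 : μ Y < ⊤)
    (α : ℝ) (hα : α ∈ Set.Ioo (0:ℝ) 1)
    (c : ℕ → ℝ)
    (hcmem : ∀ n, c n ∈ Set.Ioc (0:ℝ) 1) (hctend : Tendsto c atTop (𝓝 0)) :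
    ∃ G : X → ℝ≥0∞, Measurable G ∧ (∫⁻ x, G x ∂μ) = 1 ∧
      Filter.atTop.limsup (fun n : ℕ =>
        (ENNReal.ofReal ((c n) ^ α))⁻¹ *
          ∫⁻ x in {x | (lastVisit T Y n x : ℝ) ≤ c n * n}, G x ∂μ) = ⊤ := by
  have hT := herg.toMeasurePreserving
  have hhit : ∀ᵐ x ∂μ, ∃ n, T^[n] x ∈ Y :=
    (herg.ae_frequently_iterate_mem hcons hYm hY0.ne').mono fun _ hx => hx.exists
  have hcα : Tendsto (fun n => ENNReal.ofReal (c n ^ α)) atTop (𝓝 0) := by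
    simpa [Real.zero_rpow hα.1.ne'] using
      ENNReal.tendsto_ofReal (hctend.rpow_const (Or.inr hα.1.le))
  obtain ⟨n, hn, hsmall⟩ := ENNReal.exists_tendsto_atTop_natCast_le_inv_mul hcα
    (ε := fun k => 2⁻¹ ^ (k + 1)) (by simp) (by simp)
  obtain ⟨G, hGm, hG1, hGB⟩ := exists_density_le_setLIntegral
    (B := fun k => noReturnSet T Y (n k)) (p := fun k => 2⁻¹ ^ (k + 1))
    (fun k => measurableSet_noReturnSet hT.measurable hYm _)
    (fun k => (hT.measure_noReturnSet_pos hYm hY1.ne hinf hhit _).ne')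
    (fun k => ne_top_of_le_ne_top hY1.ne (measure_mono (noReturnSet_subset _)))
    (by rw [ENNReal.tsum_geometric_add_one, ENNReal.one_sub_inv_two, inv_inv,
      ENNReal.inv_mul_cancel two_ne_zero ENNReal.ofNat_ne_top])
  refine ⟨G, hGm, hG1, ENNReal.limsup_eq_top_of_natCast_le_comp hn fun k => (hsmall k).trans ?_⟩
  gcongr
  refine (hGB k).trans (lintegral_mono_set fun x hx => ?_)
  rw [mem_ofPred_eq, lastVisit_eq_zero_of_mem_noReturnSet hx, Nat.cast_zero]
  exact mul_nonneg (hcmem _).1.le (Nat.cast_nonneg _)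

/-- For any CEMPT and any prescribed decay `c(n)`, there is a probability density `G`
for which `c(n)^{-α} μ_G(Z_n^Y/n ≤ c(n))` has `limsup = ∞`. -/
theorem stmt11 {X : Type*} [MeasurableSpace X] {μ : Measure X} [SigmaFinite μ]
    {T : X → X} (hcons : Conservative T μ) (herg : Ergodic T μ)
    (hinf : μ Set.univ = ⊤) {Y : Set X} (hYm : MeasurableSet Y)
    (hY0 : 0 < μ Y) (hY1 : μ Y < ⊤)
    (α : ℝ) (hα : α ∈ Set.Ioo (0:ℝ) 1)
    (c : ℕ → ℝ) (hcanti : Antitone c) (hc0 : c 0 = 1)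
    (hcmem : ∀ n, c n ∈ Set.Ioc (0:ℝ) 1) (hctend : Tendsto c atTop (𝓝 0)) :
    ∃ G : X → ℝ≥0∞, Measurable G ∧ (∫⁻ x, G x ∂μ) = 1 ∧
      Filter.atTop.limsup (fun n : ℕ =>
        (ENNReal.ofReal ((c n) ^ α))⁻¹ *
          ∫⁻ x in {x | (lastVisit T Y n x : ℝ) ≤ c n * n}, G x ∂μ) = ⊤ :=
  stmt11_general hcons herg hinf hYm hY0 hY1 α hα c hcmem hctend
end
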